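/- arXiv:2207.08962 — 8 statements merged into one kernel-verified Lean document; each statement's English description precedes it below -/
import Mathlib

section
/- If S_p is the set of non-negative integers having more than p representations by a_1,...,a_k (gcd 1), s ∈ S_p and g_p is the largest integer not in S_p, then g_p - s is not in S_p. Consequently, the number n_p of non-negative integers not in S_p satisfies n_p ≥ (g_p + 1)/2. -/
noncomputable def numRep (k : ℕ) (a : Fin k → ℕ) (n : ℕ) : ℕ :=
  Set.ncard {x : Fin k → ℕ | ∑ i, a i * x i = n}

def Sp (k p : ℕ) (a : Fin k → ℕ) : Set ℕ := {n : ℕ | p < numRep k a n}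

lemma repFinite (k n : ℕ) (a : Fin k → ℕ) (ha : ∀ i, 0 < a i) :
    {x : Fin k → ℕ | ∑ i, a i * x i = n}.Finite := by
  apply Set.Finite.subset (Set.Finite.pi (fun i : Fin k => Set.finite_Iic n))
  intro x hx
  simp only [Set.mem_pi, Set.mem_univ, Set.mem_Iic, forall_true_left]
  intro i
  calc x i ≤ a i * x i := Nat.le_mul_of_pos_left _ (ha i)
    _ ≤ ∑ j, a j * x j := Finset.single_le_sum (f := fun j => a j * x j) (fun j _ => Nat.zero_le _) (Finset.mem_univ i)
    _ = n := hx

lemma Sp_add {k p : ℕ} {a : Fin k → ℕ} (ha : ∀ i, 0 < a i) {s t : ℕ}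
    (hs : s ∈ Sp k p a) (ht : t ∈ Sp k p a) : s + t ∈ Sp k p a := by
  obtain ⟨y, hy⟩ : {x : Fin k → ℕ | ∑ i, a i * x i = t}.Nonempty := by
    rw [Set.nonempty_iff_ne_empty]
    intro h
    have h0 : numRep k a t = 0 := by simp [numRep, h]
    have := ht
    simp only [Sp, Set.mem_setOf_eq, h0] at this
    omega
  have hinj : Set.InjOn (fun x : Fin k → ℕ => x + y)
      {x : Fin k → ℕ | ∑ i, a i * x i = s} := by
    intro x1 _ x2 _ h
    funext i
    have h2 : x1 i + y i = x2 i + y i := congrFun h i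
    omega
  have himg : (fun x : Fin k → ℕ => x + y) '' {x | ∑ i, a i * x i = s} ⊆
      {x : Fin k → ℕ | ∑ i, a i * x i = s + t} := by
    rintro _ ⟨x, hx, rfl⟩
    simp only [Set.mem_setOf_eq] at hx hy ⊢
    calc ∑ i, a i * (x + y) i = ∑ i, (a i * x i + a i * y i) := by
          simp [Pi.add_apply, Nat.mul_add]
      _ = (∑ i, a i * x i) + ∑ i, a i * y i := Finset.sum_add_distrib
      _ = s + t := by rw [hx, hy]
  have h1 : numRep k a s ≤ numRep k a (s + t) := by
    unfold numRep
    rw [← Set.ncard_image_of_injOn hinj]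
    exact Set.ncard_le_ncard himg (repFinite k (s + t) a ha)
  exact lt_of_lt_of_le hs h1

theorem stmt_1 (k p g : ℕ) (a : Fin k → ℕ) (ha : ∀ i, 0 < a i)
    (hgcd : Finset.univ.gcd a = 1)
    (hg : g ∉ Sp k p a ∧ ∀ m : ℕ, g < m → m ∈ Sp k p a) :
    (∀ s ∈ Sp k p a, ∀ t ∈ Sp k p a, s + t ≠ g) ∧
      g + 1 ≤ 2 * Set.ncard {n : ℕ | n ∉ Sp k p a} := by
  classical
  have key : ∀ s ∈ Sp k p a, ∀ t ∈ Sp k p a, s + t ≠ g := by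
    intro s hs t ht hst
    exact hg.1 (hst ▸ Sp_add ha hs ht)
  refine ⟨key, ?_⟩
  set C : Finset ℕ := (Finset.range (g + 1)).filter (fun n => n ∉ Sp k p a) with hC
  have hset : {n : ℕ | n ∉ Sp k p a} = ↑C := by
    ext n
    simp only [hC, Set.mem_setOf_eq, Finset.coe_filter, Finset.mem_range]
    constructor
    · intro h
      refine ⟨?_, h⟩
      by_contra hc
      exact h (hg.2 n (by omega))
    · tauto
  rw [hset, Set.ncard_coe_finset]
  set f : ℕ → ℕ := fun n => if n ∈ Sp k p a then g - n else n with hf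
  have hmaps : ∀ n ∈ Finset.range (g + 1), f n ∈ C := by
    intro n hn
    rw [Finset.mem_range] at hn
    simp only [hf]
    by_cases hsp : n ∈ Sp k p a
    · simp only [if_pos hsp, hC, Finset.mem_filter, Finset.mem_range]
      refine ⟨by omega, ?_⟩
      intro hgn
      exact key n hsp (g - n) hgn (by omega)
    · simp only [if_neg hsp, hC, Finset.mem_filter, Finset.mem_range]
      exact ⟨hn, hsp⟩
  have hfiber : ∀ b ∈ C,
      ((Finset.range (g + 1)).filter (fun n => f n = b)).card ≤ 2 := by
    intro b _
    have hsub : (Finset.range (g + 1)).filter (fun n => f n = b) ⊆ {b, g - b} := by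
      intro n hn
      simp only [Finset.mem_filter, Finset.mem_range] at hn
      obtain ⟨hn1, hn2⟩ := hn
      simp only [hf] at hn2
      simp only [Finset.mem_insert, Finset.mem_singleton]
      by_cases hsp : n ∈ Sp k p a
      · rw [if_pos hsp] at hn2; right; omega
      · rw [if_neg hsp] at hn2; left; exact hn2
    calc ((Finset.range (g + 1)).filter (fun n => f n = b)).card
        ≤ ({b, g - b} : Finset ℕ).card := Finset.card_le_card hsub
      _ ≤ 2 := by
          apply le_trans (Finset.card_insert_le _ _)
          simp
  have := Finset.card_le_mul_card_image_of_maps_to hmaps 2 hfiber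
  simpa using this
end

section
/- Let a, b be coprime positive integers and p a non-negative integer. The number of non-negative integers n such that ax + by = n has at most p solutions in non-negative integers equals pab + (a-1)(b-1)/2. -/
noncomputable def numRep2 (a b n : ℕ) : ℕ :=
  Set.ncard {xy : ℕ × ℕ | a * xy.1 + b * xy.2 = n}

/-- The least `x` with `a * x ≡ n [MOD b]` (when `a` is coprime to `b`). -/
noncomputable def sylX0 (b a n : ℕ) : ℕ := ((n : ZMod b) * (a : ZMod b)⁻¹).val

lemma sylX0_lt {b : ℕ} (hb : 0 < b) (a n : ℕ) : sylX0 b a n < b := by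
  haveI : NeZero b := ⟨hb.ne'⟩
  exact ZMod.val_lt _

lemma sylX0_modeq {a b : ℕ} (hb : 0 < b) (hab : Nat.Coprime a b) (n : ℕ) :
    a * sylX0 b a n ≡ n [MOD b] := by
  haveI : NeZero b := ⟨hb.ne'⟩
  rw [← ZMod.natCast_eq_natCast_iff, Nat.cast_mul, sylX0, ZMod.natCast_val, ZMod.cast_id]
  rw [mul_comm ((n : ZMod b)) _, ← mul_assoc, ZMod.coe_mul_inv_eq_one a hab, one_mul]

lemma sylX0_mod {a b : ℕ} (n : ℕ) : sylX0 b a (n % b) = sylX0 b a n := by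
  unfold sylX0
  rw [ZMod.natCast_mod]

lemma sylX0_inv {a b : ℕ} (hb : 0 < b) (hab : Nat.Coprime a b) {s : ℕ} (hs : s < b) :
    sylX0 b a (a * s % b) = s := by
  haveI : NeZero b := ⟨hb.ne'⟩
  unfold sylX0
  rw [ZMod.natCast_mod, Nat.cast_mul, mul_comm ((a : ZMod b)) ((s : ZMod b)), mul_assoc,
    ZMod.coe_mul_inv_eq_one a hab, mul_one, ZMod.val_cast_of_lt hs]

lemma solset_finite {a b : ℕ} (ha : 0 < a) (hb : 0 < b) (n : ℕ) :
    {xy : ℕ × ℕ | a * xy.1 + b * xy.2 = n}.Finite := by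
  apply Set.Finite.subset ((Set.finite_Iic n).prod (Set.finite_Iic n))
  rintro ⟨x, y⟩ h
  simp only [Set.mem_setOf_eq] at h
  simp only [Set.mem_prod, Set.mem_Iic]
  constructor <;> nlinarith

lemma numRep2_le_iff {a b : ℕ} (ha : 0 < a) (hb : 0 < b) (hab : Nat.Coprime a b)
    (p n : ℕ) : numRep2 a b n ≤ p ↔ n < a * sylX0 b a n + p * (a * b) := by
  set x₀ := sylX0 b a n with hx₀
  constructor
  · intro h
    by_contra hle
    push_neg at hle
    have hax : a * x₀ ≤ n := le_trans (Nat.le_add_right _ _) hle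
    obtain ⟨c, hc⟩ := (Nat.modEq_iff_dvd' hax).mp (sylX0_modeq hb hab n)
    have hn : n = a * x₀ + b * c := by omega
    have hpc : a * p ≤ c := by
      have h1 : b * (a * p) ≤ b * c := by nlinarith
      exact Nat.le_of_mul_le_mul_left h1 hb
    set g : ℕ → ℕ × ℕ := fun k => (x₀ + b * k, c - a * k) with hg
    have hmem : g '' Set.Iic p ⊆ {xy : ℕ × ℕ | a * xy.1 + b * xy.2 = n} := by
      rintro _ ⟨k, hk, rfl⟩
      simp only [Set.mem_Iic] at hk
      have hak : a * k ≤ c := le_trans (Nat.mul_le_mul_left a hk) hpc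
      obtain ⟨d, hd⟩ := Nat.exists_eq_add_of_le hak
      simp only [hg, Set.mem_setOf_eq]
      rw [show c - a * k = d by omega, hn, hd]
      ring
    have hinj : Set.InjOn g (Set.Iic p) := by
      intro k _ l _ hkl
      have h1 : x₀ + b * k = x₀ + b * l := congrArg Prod.fst hkl
      have h2 : b * k = b * l := by omega
      exact Nat.eq_of_mul_eq_mul_left hb h2
    have hcard : p + 1 ≤ numRep2 a b n := by
      have e1 : (g '' Set.Iic p).ncard = p + 1 := by
        rw [Set.ncard_image_of_injOn hinj, ← Finset.coe_Iic, Set.ncard_coe_finset,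
          Nat.card_Iic]
      calc p + 1 = (g '' Set.Iic p).ncard := e1.symm
        _ ≤ numRep2 a b n := Set.ncard_le_ncard hmem (solset_finite ha hb n)
    omega
  · intro h
    set S := {xy : ℕ × ℕ | a * xy.1 + b * xy.2 = n} with hS
    have key : ∀ xy ∈ S, xy.1 % b = x₀ ∧ xy.1 / b < p := by
      rintro ⟨x, y⟩ hxy
      simp only [hS, Set.mem_setOf_eq] at hxy
      have h1 : a * x ≡ n [MOD b] := (Nat.modEq_iff_dvd' (by omega)).mpr ⟨y, by omega⟩
      have h2 : a * x ≡ a * x₀ [MOD b] := h1.trans (sylX0_modeq hb hab n).symm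
      have h3 : x ≡ x₀ [MOD b] := Nat.ModEq.cancel_left_of_coprime (by simpa using hab.symm) h2
      have h4 : x % b = x₀ := by
        have := h3
        unfold Nat.ModEq at this
        rwa [Nat.mod_eq_of_lt (sylX0_lt hb a n)] at this
      refine ⟨h4, ?_⟩
      by_contra hp
      push_neg at hp
      have hx : b * (x / b) + x % b = x := Nat.div_add_mod x b
      have e1 : a * x = a * b * (x / b) + a * (x % b) := by nth_rewrite 1 [← hx]; ring
      have e2 : a * b * p ≤ a * b * (x / b) := Nat.mul_le_mul_left _ hp
      have e3 : p * (a * b) = a * b * p := by ring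
      rw [h4] at e1
      omega
    have hinj : Set.InjOn (fun xy : ℕ × ℕ => xy.1 / b) S := by
      rintro ⟨x, y⟩ hxy ⟨x', y'⟩ hxy' hdiv
      simp only at hdiv
      obtain ⟨hm, _⟩ := key _ hxy
      obtain ⟨hm', _⟩ := key _ hxy'
      have hx : b * (x / b) + x % b = x := Nat.div_add_mod x b
      have hx' : b * (x' / b) + x' % b = x' := Nat.div_add_mod x' b
      have hxx : x = x' := by rw [← hx, ← hx', hdiv, hm, hm']
      subst hxx
      simp only [hS, Set.mem_setOf_eq] at hxy hxy'
      have : b * y = b * y' := by omega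
      have : y = y' := Nat.eq_of_mul_eq_mul_left hb this
      simp [this]
    have hsub : (fun xy : ℕ × ℕ => xy.1 / b) '' S ⊆ Set.Iio p := by
      rintro _ ⟨xy, hxy, rfl⟩
      exact (key _ hxy).2
    calc numRep2 a b n = ((fun xy : ℕ × ℕ => xy.1 / b) '' S).ncard :=
          (Set.ncard_image_of_injOn hinj).symm
      _ ≤ (Set.Iio p).ncard := Set.ncard_le_ncard hsub (Set.finite_Iio p)
      _ = p := by rw [← Finset.coe_Iio, Set.ncard_coe_finset, Nat.card_Iio]

theorem stmt_3 (a b p : ℕ) (ha : 0 < a) (hb : 0 < b) (hab : Nat.Coprime a b) :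
    Set.ncard {n : ℕ | numRep2 a b n ≤ p} = p * a * b + (a - 1) * (b - 1) / 2 := by
  haveI : NeZero b := ⟨hb.ne'⟩
  set m : ℕ → ℕ := fun r => a * sylX0 b a r / b with hm
  have hmod : ∀ r, r < b → a * sylX0 b a r % b = r := by
    intro r hr
    have h1 := sylX0_modeq hb hab r
    unfold Nat.ModEq at h1
    rwa [Nat.mod_eq_of_lt hr] at h1
  have hmx : ∀ r, r < b → b * m r + r = a * sylX0 b a r := by
    intro r hr
    simp only [hm]
    have h2 := Nat.div_add_mod (a * sylX0 b a r) b
    rw [hmod r hr] at h2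
    exact h2
  set T := (Finset.range b).biUnion
    (fun r => (Finset.range (m r + p * a)).image (fun k => b * k + r)) with hT
  have hmemT : ∀ n, n ∈ T ↔ numRep2 a b n ≤ p := by
    intro n
    rw [numRep2_le_iff ha hb hab, hT, Finset.mem_biUnion]
    constructor
    · rintro ⟨r, hr, hn⟩
      rw [Finset.mem_image] at hn
      obtain ⟨k, hk, rfl⟩ := hn
      rw [Finset.mem_range] at hr hk
      have hnr : (b * k + r) % b = r := by
        rw [Nat.mul_add_mod, Nat.mod_eq_of_lt hr]
      have hx0 : sylX0 b a (b * k + r) = sylX0 b a r :=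
        (sylX0_mod (b * k + r)).symm.trans (by rw [hnr])
      rw [hx0]
      have e1 := hmx r hr
      have e2 : b * k < b * (m r + p * a) := (Nat.mul_lt_mul_left hb).mpr hk
      have e3 : b * (m r + p * a) = b * m r + b * (p * a) := by ring
      have e4 : p * (a * b) = b * (p * a) := by ring
      omega
    · intro hn
      refine ⟨n % b, Finset.mem_range.mpr (Nat.mod_lt n hb), ?_⟩
      rw [Finset.mem_image]
      refine ⟨n / b, Finset.mem_range.mpr ?_, Nat.div_add_mod n b⟩
      have hr : n % b < b := Nat.mod_lt n hb
      have hx0 : sylX0 b a (n % b) = sylX0 b a n := sylX0_mod n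
      have e1 := hmx (n % b) hr
      rw [hx0] at e1
      have e5 : b * (n / b) + n % b = n := Nat.div_add_mod n b
      have e4 : p * (a * b) = b * (p * a) := by ring
      have e6 : b * (n / b) < b * (m (n % b) + p * a) := by
        have e3 : b * (m (n % b) + p * a) = b * m (n % b) + b * (p * a) := by ring
        omega
      exact Nat.lt_of_mul_lt_mul_left e6
  have hset : {n : ℕ | numRep2 a b n ≤ p} = ↑T := by
    ext n
    simp only [Set.mem_setOf_eq, Finset.coe_sort_coe, Finset.mem_coe, hmemT]
  rw [hset, Set.ncard_coe_finset]
  have hdisj : ∀ r ∈ Finset.range b, ∀ s ∈ Finset.range b, r ≠ s →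
      Disjoint ((Finset.range (m r + p * a)).image (fun k => b * k + r))
        ((Finset.range (m s + p * a)).image (fun k => b * k + s)) := by
    intro r hr s hs hrs
    rw [Finset.mem_range] at hr hs
    rw [Finset.disjoint_left]
    rintro n hn hn'
    rw [Finset.mem_image] at hn hn'
    obtain ⟨k, _, hk⟩ := hn
    obtain ⟨l, _, hl⟩ := hn'
    have h1 : n % b = r := by rw [← hk, Nat.mul_add_mod, Nat.mod_eq_of_lt hr]
    have h2 : n % b = s := by rw [← hl, Nat.mul_add_mod, Nat.mod_eq_of_lt hs]
    exact hrs (h1 ▸ h2)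
  rw [hT, Finset.card_biUnion hdisj]
  have hcardim : ∀ r, ((Finset.range (m r + p * a)).image (fun k => b * k + r)).card
      = m r + p * a := by
    intro r
    rw [Finset.card_image_of_injective _ (fun k l hkl => by
      have : b * k = b * l := by omega
      exact Nat.eq_of_mul_eq_mul_left hb this)]
    exact Finset.card_range _
  rw [Finset.sum_congr rfl (fun r _ => hcardim r)]
  rw [Finset.sum_add_distrib, Finset.sum_const, Finset.card_range, smul_eq_mul]
  -- sum of sylX0 over range b equals sum of id
  have hbij : ∑ r ∈ Finset.range b, sylX0 b a r = ∑ r ∈ Finset.range b, r := by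
    refine Finset.sum_nbij' (sylX0 b a) (fun s => a * s % b) ?_ ?_ ?_ ?_ ?_
    · intro r hr
      exact Finset.mem_range.mpr (sylX0_lt hb a r)
    · intro s hs
      exact Finset.mem_range.mpr (Nat.mod_lt _ hb)
    · intro r hr
      exact hmod r (Finset.mem_range.mp hr)
    · intro s hs
      exact sylX0_inv hb hab (Finset.mem_range.mp hs)
    · intro r _
      rfl
  have hsum : b * (∑ r ∈ Finset.range b, m r) + ∑ r ∈ Finset.range b, r
      = a * ∑ r ∈ Finset.range b, r := by
    calc b * (∑ r ∈ Finset.range b, m r) + ∑ r ∈ Finset.range b, r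
        = ∑ r ∈ Finset.range b, (b * m r + r) := by
          rw [Finset.sum_add_distrib, Finset.mul_sum]
      _ = ∑ r ∈ Finset.range b, a * sylX0 b a r :=
          Finset.sum_congr rfl (fun r hr => hmx r (Finset.mem_range.mp hr))
      _ = a * ∑ r ∈ Finset.range b, sylX0 b a r := by rw [Finset.mul_sum]
      _ = a * ∑ r ∈ Finset.range b, r := by rw [hbij]
  set t := ∑ r ∈ Finset.range b, m r with ht
  set s := ∑ r ∈ Finset.range b, r with hs
  have hg : 2 * s = b * (b - 1) := by
    rw [hs, mul_comm]
    exact Finset.sum_range_id_mul_two b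
  have h2t : 2 * t = (a - 1) * (b - 1) := by
    have e1 : 2 * (b * t + s) = 2 * (a * s) := by rw [hsum]
    have e2 : 2 * (b * t + s) = b * (2 * t) + 2 * s := by ring
    have e3 : 2 * (a * s) = a * (2 * s) := by ring
    rw [e2, e3, hg] at e1
    have e4 : a * (b * (b - 1)) = b * (a * (b - 1)) := by ring
    rw [e4] at e1
    have e5 : b * (2 * t) + b * (b - 1) = b * (2 * t + (b - 1)) := by ring
    rw [e5] at e1
    have e6 : 2 * t + (b - 1) = a * (b - 1) := Nat.eq_of_mul_eq_mul_left hb e1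
    have e7 : (a - 1) * (b - 1) = a * (b - 1) - (b - 1) := Nat.sub_one_mul a (b - 1)
    have e8 : b - 1 ≤ a * (b - 1) := Nat.le_mul_of_pos_left _ ha
    omega
  have e9 : b * (p * a) = p * a * b := by ring
  omega
end

section
/- Let a, b be coprime positive integers and p a non-negative integer. The least non-negative integer having more than p representations as ax + by with x, y ∈ ℕ is pab. -/
lemma repSet_finite (a b n : ℕ) (ha : 0 < a) (hb : 0 < b) :
    {xy : ℕ × ℕ | a * xy.1 + b * xy.2 = n}.Finite := by
  apply Set.Finite.subset ((Set.finite_Iic n).prod (Set.finite_Iic n))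
  rintro ⟨x, y⟩ h
  simp only [Set.mem_setOf_eq] at h
  constructor
  · have : x ≤ a * x := Nat.le_mul_of_pos_left x ha
    simp only [Set.mem_Iic]; omega
  · have : y ≤ b * y := Nat.le_mul_of_pos_left y hb
    simp only [Set.mem_Iic]; omega

theorem stmt_7 (a b p : ℕ) (ha : 0 < a) (hb : 0 < b) (hab : Nat.Coprime a b) :
    IsLeast {n : ℕ | p < numRep2 a b n} (p * a * b) := by
  constructor
  · -- p * a * b has at least p + 1 representations
    have hf := repSet_finite a b (p * a * b) ha hb
    set f : Fin (p + 1) → ℕ × ℕ := fun j => ((j : ℕ) * b, (p - (j : ℕ)) * a) with hfdef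
    have hinj : Function.Injective f := by
      intro j k h
      simp only [hfdef, Prod.mk.injEq] at h
      exact Fin.ext (Nat.eq_of_mul_eq_mul_right hb h.1)
    have hsub : f '' Set.univ ⊆ {xy : ℕ × ℕ | a * xy.1 + b * xy.2 = p * a * b} := by
      rintro _ ⟨j, -, rfl⟩
      have hj : (j : ℕ) ≤ p := Nat.lt_succ_iff.mp j.isLt
      have hk : (j : ℕ) + (p - (j : ℕ)) = p := by omega
      simp only [hfdef, Set.mem_setOf_eq]
      calc a * ((j : ℕ) * b) + b * ((p - (j : ℕ)) * a)
          = a * b * ((j : ℕ) + (p - (j : ℕ))) := by ring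
        _ = p * a * b := by rw [hk]; ring
    have h1 : (f '' Set.univ).ncard = p + 1 := by
      rw [Set.ncard_image_of_injective _ hinj, Set.ncard_univ, Nat.card_eq_fintype_card,
        Fintype.card_fin]
    have h2 : (f '' Set.univ).ncard ≤ numRep2 a b (p * a * b) :=
      Set.ncard_le_ncard hsub hf
    simp only [Set.mem_setOf_eq, numRep2]
    unfold numRep2 at h2
    omega
  · -- lower bound
    intro n hn
    simp only [Set.mem_setOf_eq, numRep2] at hn
    set S := {xy : ℕ × ℕ | a * xy.1 + b * xy.2 = n} with hS
    have hf := repSet_finite a b n ha hb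
    have key : ∀ u₁ v₁ u₂ v₂ : ℕ, u₁ ≤ u₂ → a * u₁ + b * v₁ = a * u₂ + b * v₂ →
        u₁ / b = u₂ / b → u₁ = u₂ := by
      intro u₁ v₁ u₂ v₂ hle heqn hdiv
      have hdvd : (b : ℤ) ∣ (a : ℤ) * ((u₂ : ℤ) - u₁) := by
        refine ⟨(v₁ : ℤ) - v₂, ?_⟩
        have : (a : ℤ) * u₁ + b * v₁ = a * u₂ + b * v₂ := by exact_mod_cast heqn
        ring_nf
        linarith
      have hcop : IsCoprime (b : ℤ) (a : ℤ) :=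
        (Nat.isCoprime_iff_coprime.mpr hab).symm
      have hdvd2 : (b : ℤ) ∣ ((u₂ : ℤ) - u₁) := hcop.dvd_of_dvd_mul_left hdvd
      have hcast : ((u₂ - u₁ : ℕ) : ℤ) = (u₂ : ℤ) - u₁ := by
        push_cast [hle]; ring
      have hdvd3 : b ∣ u₂ - u₁ := by
        rw [← Int.natCast_dvd_natCast, hcast]; exact hdvd2
      obtain ⟨t, ht⟩ := hdvd3
      have hu2 : u₂ = u₁ + b * t := by rw [← ht, Nat.add_sub_cancel' hle]
      rw [hu2, Nat.add_mul_div_left _ _ hb] at hdiv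
      have ht0 : t = 0 := by omega
      simp [hu2, ht0]
    have hinjOn : Set.InjOn (fun xy : ℕ × ℕ => xy.1 / b) S := by
      rintro ⟨x₁, y₁⟩ h1 ⟨x₂, y₂⟩ h2 heq
      simp only [hS, Set.mem_setOf_eq] at h1 h2
      simp only at heq
      have hx : x₁ = x₂ := by
        rcases Nat.le_total x₁ x₂ with hle | hle
        · exact key x₁ y₁ x₂ y₂ hle (by omega) heq
        · exact (key x₂ y₂ x₁ y₁ hle (by omega) heq.symm).symm
      subst hx
      have hy : y₁ = y₂ := Nat.eq_of_mul_eq_mul_left hb (by omega)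
      simp [hy]
    have himg : p < ((fun xy : ℕ × ℕ => xy.1 / b) '' S).ncard := by
      rw [Set.ncard_image_of_injOn hinjOn]; exact hn
    have hex : ∃ m ∈ (fun xy : ℕ × ℕ => xy.1 / b) '' S, p ≤ m := by
      by_contra h
      push_neg at h
      have hsub : (fun xy : ℕ × ℕ => xy.1 / b) '' S ⊆ ↑(Finset.range p) := by
        intro m hm
        exact Finset.mem_coe.mpr (Finset.mem_range.mpr (h m hm))
      have := Set.ncard_le_ncard hsub (Finset.range p).finite_toSet
      rw [Set.ncard_coe_finset, Finset.card_range] at this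
      omega
    obtain ⟨m, hm, hpm⟩ := hex
    obtain ⟨⟨x, y⟩, hxy, hgm⟩ := hm
    simp only [hS, Set.mem_setOf_eq] at hxy
    simp only at hgm
    have hx : p * b ≤ x := by
      calc p * b ≤ (x / b) * b := Nat.mul_le_mul_right b (hgm ▸ hpm)
        _ ≤ x := Nat.div_mul_le_self x b
    have h3 : a * (p * b) ≤ a * x := Nat.mul_le_mul_left a hx
    nlinarith
end

section
/- Let S be a numerical semigroup minimally generated by a_1,...,a_k (gcd 1), p ≥ 0, and let d = gcd(a_2,...,a_k). Let S_p = {n ∈ ℕ : d_A(n) > p} and T_p = {n ∈ ℕ : d_{A'}(n) > p} where A' = {a_1, a_2/d, ..., a_k/d}. Then Ape(S_p, a_1) = d · Ape(T_p, a_1), where Ape(U, m) = {u ∈ U : u - m ∉ U}. -/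
/-- representations of `n` by the generators `a₁, b 0, …, b (k-1)`. -/
noncomputable def numRep' (a₁ : ℕ) {k : ℕ} (b : Fin k → ℕ) (n : ℕ) : ℕ :=
  Set.ncard {xy : ℕ × (Fin k → ℕ) | a₁ * xy.1 + ∑ i, b i * xy.2 i = n}

def Sp' (p a₁ : ℕ) {k : ℕ} (b : Fin k → ℕ) : Set ℕ := {n : ℕ | p < numRep' a₁ b n}

/-- the Apéry set of `U ⊆ ℕ` with respect to `m`: elements `u ∈ U` with `u - m ∉ U`. -/
def Ape (U : Set ℕ) (m : ℕ) : Set ℕ := {u ∈ U | ¬∃ v ∈ U, v + m = u}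

lemma repD {k : ℕ} (a₁ d s w : ℕ) (b b' : Fin k → ℕ) (hd : 0 < d) (hs : s < d)
    (hcop : Nat.gcd a₁ d = 1) (hb : ∀ i, b i = d * b' i) :
    numRep' a₁ b (d * w + a₁ * s) = numRep' a₁ b' w := by
  have hsum : ∀ y : Fin k → ℕ, ∑ i, b i * y i = d * ∑ i, b' i * y i := by
    intro y
    rw [Finset.mul_sum]
    exact Finset.sum_congr rfl fun i _ => by rw [hb i, mul_assoc]
  have himg : {xy : ℕ × (Fin k → ℕ) | a₁ * xy.1 + ∑ i, b i * xy.2 i = d * w + a₁ * s}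
      = (fun tz : ℕ × (Fin k → ℕ) => (d * tz.1 + s, tz.2)) ''
        {xy : ℕ × (Fin k → ℕ) | a₁ * xy.1 + ∑ i, b' i * xy.2 i = w} := by
    ext ⟨x, y⟩
    simp only [Set.mem_setOf_eq, Set.mem_image, Prod.mk.injEq, Prod.exists]
    constructor
    · intro h
      rw [hsum] at h
      set B := ∑ i, b' i * y i with hB
      have hmx : a₁ * x % d = a₁ * s % d := by
        have h1 : a₁ * x + d * B = a₁ * s + d * w := by omega
        have h2 := congrArg (· % d) h1
        simpa [Nat.add_mul_mod_self_left] using h2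
      have hxs : x % d = s % d :=
        Nat.ModEq.cancel_left_of_coprime (Nat.Coprime.symm hcop) hmx
      have hxsd : x % d = s := by rw [hxs, Nat.mod_eq_of_lt hs]
      have hx : d * (x / d) + s = x := by
        conv_rhs => rw [← Nat.div_add_mod x d]
        rw [hxsd]
      refine ⟨x / d, y, ?_, hx, rfl⟩
      have h2 : a₁ * (d * (x / d) + s) + d * B = d * w + a₁ * s := by rw [hx]; exact h
      have h3 : a₁ * (d * (x / d) + s) + d * B = a₁ * s + d * (a₁ * (x / d) + B) := by ring
      exact Nat.eq_of_mul_eq_mul_left hd (by omega : d * (a₁ * (x / d) + B) = d * w)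
    · rintro ⟨t, z, ht, hx, rfl⟩
      subst hx
      rw [hsum, ← ht]; ring
  rw [numRep', numRep', himg, Set.ncard_image_of_injective]
  rintro ⟨t1, z1⟩ ⟨t2, z2⟩ h
  simp only [Prod.mk.injEq] at h
  obtain ⟨h1, h2⟩ := h
  have ht : t1 = t2 := Nat.eq_of_mul_eq_mul_left hd (by omega)
  simp [ht, h2]

theorem stmt_11 (k p a₁ : ℕ) (b : Fin k → ℕ) (ha₁ : 0 < a₁) (hb : ∀ i, 0 < b i)
    (hgcd : Nat.gcd a₁ (Finset.univ.gcd b) = 1)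
    (hmin₁ : a₁ ∉ AddSubmonoid.closure (Set.range b))
    (hminb : ∀ i, b i ∉ AddSubmonoid.closure ({a₁} ∪ b '' {j | j ≠ i})) :
    Ape (Sp' p a₁ b) a₁ =
      (fun x => Finset.univ.gcd b * x) ''
        Ape (Sp' p a₁ (fun i => b i / Finset.univ.gcd b)) a₁ := by
  set d := Finset.univ.gcd b with hd
  by_cases hd0 : d = 0
  · -- degenerate case: k = 0 (Fin k is empty) and a₁ = 1
    have hemp : IsEmpty (Fin k) := by
      constructor
      intro i
      have h0 : b i = 0 := Finset.gcd_eq_zero_iff.mp (hd ▸ hd0) i (Finset.mem_univ i)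
      exact (hb i).ne' h0
    have ha1 : a₁ = 1 := by
      rw [hd0] at hgcd
      simpa using hgcd
    subst ha1
    have hone : ∀ (c : Fin k → ℕ) (n : ℕ), numRep' 1 c n = 1 := by
      intro c n
      have hset : {xy : ℕ × (Fin k → ℕ) | 1 * xy.1 + ∑ i, c i * xy.2 i = n}
          = {((n : ℕ), (fun _ => 0 : Fin k → ℕ))} := by
        ext ⟨x, y⟩
        have hy : y = fun _ => 0 := funext fun i => isEmptyElim i
        simp [Finset.univ_eq_empty, hy, Prod.ext_iff]
      rw [numRep', hset, Set.ncard_singleton]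
    have hSp : ∀ c : Fin k → ℕ, Sp' p 1 c = {n : ℕ | p < 1} := by
      intro c; ext n; simp [Sp', hone]
    rw [hSp, hSp, hd0]
    rcases Nat.eq_zero_or_pos p with rfl | hp
    · have hU : {n : ℕ | 0 < 1} = (Set.univ : Set ℕ) := by ext n; simp
      rw [hU]
      have hA : Ape (Set.univ : Set ℕ) 1 = {0} := by
        ext u
        constructor
        · rintro ⟨-, h⟩
          have hu0 : u = 0 := by
            by_contra hu
            exact h ⟨u - 1, Set.mem_univ _, by omega⟩
          simpa using hu0
        · intro hu
          have hu0 : u = 0 := hu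
          subst hu0
          refine ⟨Set.mem_univ _, ?_⟩
          rintro ⟨v, -, hv⟩
          omega
      rw [hA]
      ext u
      simp
    · have hE : {n : ℕ | p < 1} = (∅ : Set ℕ) := by ext n; simp; omega
      rw [hE]
      have hA : Ape (∅ : Set ℕ) 1 = ∅ := by
        ext u; simp [Ape]
      rw [hA]
      simp
  · -- main case: d > 0
    have hdpos : 0 < d := Nat.pos_of_ne_zero hd0
    have hb' : ∀ i, b i = d * (b i / d) := fun i =>
      (Nat.mul_div_cancel' (Finset.gcd_dvd (Finset.mem_univ i))).symm
    have key : ∀ s w : ℕ, s < d →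
        numRep' a₁ b (d * w + a₁ * s) = numRep' a₁ (fun i => b i / d) w :=
      fun s w hs => repD a₁ d s w b _ hdpos hs hgcd hb'
    ext u
    simp only [Ape, Sp', Set.mem_setOf_eq, Set.mem_image]
    constructor
    · rintro ⟨huS, hnot⟩
      have hne : {xy : ℕ × (Fin k → ℕ) | a₁ * xy.1 + ∑ i, b i * xy.2 i = u}.Nonempty := by
        apply Set.nonempty_of_ncard_ne_zero
        have : p < numRep' a₁ b u := huS
        rw [numRep'] at this
        omega
      obtain ⟨⟨x, y⟩, hxy⟩ := hne
      simp only [Set.mem_setOf_eq] at hxy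
      have hsum : ∑ i, b i * y i = d * ∑ i, (b i / d) * y i := by
        rw [Finset.mul_sum]
        refine Finset.sum_congr rfl fun i _ => ?_
        conv_lhs => rw [hb' i]
        ring
      set B := ∑ i, (b i / d) * y i with hB
      set W := a₁ * (x / d) + B with hW
      have hxdm : d * (x / d) + x % d = x := Nat.div_add_mod x d
      have hu : d * W + a₁ * (x % d) = u := by
        have h1 : d * W + a₁ * (x % d) = a₁ * (d * (x / d) + x % d) + d * B := by
          rw [hW]; ring
        rw [h1, hxdm, ← hsum, hxy]
      have hrd : x % d < d := Nat.mod_lt _ hdpos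
      have hr0 : x % d = 0 := by
        by_contra hr
        obtain ⟨r', hr'⟩ : ∃ r', x % d = r' + 1 := ⟨x % d - 1, by omega⟩
        have h1 : numRep' a₁ b (d * W + a₁ * r') = numRep' a₁ (fun i => b i / d) W :=
          key r' W (by omega)
        have h2 : numRep' a₁ b u = numRep' a₁ (fun i => b i / d) W := by
          rw [← hu]; exact key _ W hrd
        refine hnot ⟨d * W + a₁ * r', ?_, ?_⟩
        · rw [h1, ← h2]; exact huS
        · rw [← hu, hr']; ring
      have huW : d * W = u := by
        rw [hr0] at hu; simpa using hu
      refine ⟨W, ⟨?_, ?_⟩, huW⟩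
      · have h0 := key 0 W hdpos
        simp only [Nat.mul_zero, Nat.add_zero] at h0
        rw [← h0, huW]; exact huS
      · rintro ⟨w, hw, hwm⟩
        obtain ⟨e, he⟩ : ∃ e, d = e + 1 := ⟨d - 1, by omega⟩
        have h1 : numRep' a₁ b (d * w + a₁ * e) = numRep' a₁ (fun i => b i / d) w :=
          key e w (by omega)
        refine hnot ⟨d * w + a₁ * e, by rw [h1]; exact hw, ?_⟩
        have h2 : d * w + a₁ * e + a₁ = d * (w + a₁) := by rw [he]; ring
        rw [h2, hwm, huW]
    · rintro ⟨m, ⟨hmT, hmnot⟩, hum⟩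
      constructor
      · have h0 := key 0 m hdpos
        simp only [Nat.mul_zero, Nat.add_zero] at h0
        rw [← hum, h0]; exact hmT
      · rintro ⟨v, hvS, hva⟩
        have hne : {xy : ℕ × (Fin k → ℕ) | a₁ * xy.1 + ∑ i, b i * xy.2 i = v}.Nonempty := by
          apply Set.nonempty_of_ncard_ne_zero
          have : p < numRep' a₁ b v := hvS
          rw [numRep'] at this
          omega
        obtain ⟨⟨x, y⟩, hxy⟩ := hne
        simp only [Set.mem_setOf_eq] at hxy
        have hsum : ∑ i, b i * y i = d * ∑ i, (b i / d) * y i := by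
          rw [Finset.mul_sum]
          refine Finset.sum_congr rfl fun i _ => ?_
          conv_lhs => rw [hb' i]
          ring
        set B := ∑ i, (b i / d) * y i with hB
        have heq : a₁ * (x + 1) + d * B = d * m := by
          have h1 : a₁ * (x + 1) + d * B = a₁ * x + d * B + a₁ := by ring
          rw [h1, ← hsum, hxy, hva, ← hum]
        have hdvd : d ∣ x + 1 := by
          have hmod : a₁ * (x + 1) % d = 0 := by
            have h' := congrArg (· % d) heq
            simpa [Nat.add_mul_mod_self_left, Nat.mul_mod_right] using h'
          exact Nat.Coprime.dvd_of_dvd_mul_left (Nat.Coprime.symm hgcd)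
            (Nat.dvd_of_mod_eq_zero hmod)
        obtain ⟨q, hq⟩ := hdvd
        obtain ⟨e, he⟩ : ∃ e, d = e + 1 := ⟨d - 1, by omega⟩
        have hq1 : q ≠ 0 := by rintro rfl; simp at hq
        obtain ⟨q', hq'⟩ : ∃ q', q = q' + 1 := ⟨q - 1, by omega⟩
        have hdq : d * q = d * q' + d := by rw [hq']; ring
        have hxval : x = d * q' + e := by omega
        -- derive m = a₁ * (q' + 1) + B
        have hm : a₁ * (q' + 1) + B = m := by
          apply Nat.eq_of_mul_eq_mul_left hdpos
          have h2 : d * (a₁ * (q' + 1) + B) = a₁ * (x + 1) + d * B := by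
            rw [hxval, he]; ring
          rw [h2, heq]
        have hma : a₁ ≤ m := by
          have : a₁ ≤ a₁ * (q' + 1) := Nat.le_mul_of_pos_right a₁ (by omega)
          omega
        obtain ⟨w, rfl⟩ : ∃ w, m = w + a₁ := ⟨m - a₁, by omega⟩
        have hv : v = d * w + a₁ * e := by
          have h3 : d * (w + a₁) = d * w + a₁ * e + a₁ := by rw [he]; ring
          omega
        have h4 : numRep' a₁ b v = numRep' a₁ (fun i => b i / d) w := by
          rw [hv]; exact key e w (by omega)
        exact hmnot ⟨w, by rw [← h4]; exact hvS, rfl⟩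
end

section
/- With notation as in the Apéry set scaling result, the p-Frobenius numbers satisfy g_p(A) = d·g_p(A_d) + (d-1)a_1, where A = {a_1,...,a_k} with d = gcd(a_2,...,a_k) and A_d = {a_1, a_2/d,...,a_k/d}. -/
theorem stmt_12 (k p a₁ gA gT : ℕ) (b : Fin k → ℕ) (ha₁ : 0 < a₁) (hb : ∀ i, 0 < b i)
    (hgcd : Nat.gcd a₁ (Finset.univ.gcd b) = 1)
    (hmin₁ : a₁ ∉ AddSubmonoid.closure (Set.range b))
    (hminb : ∀ i, b i ∉ AddSubmonoid.closure ({a₁} ∪ b '' {j | j ≠ i}))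
    (hgA : gA ∉ Sp' p a₁ b ∧ ∀ n : ℕ, n ∉ Sp' p a₁ b → n ≤ gA)
    (hgT : gT ∉ Sp' p a₁ (fun i => b i / Finset.univ.gcd b) ∧
      ∀ n : ℕ, n ∉ Sp' p a₁ (fun i => b i / Finset.univ.gcd b) → n ≤ gT) :
    gA = Finset.univ.gcd b * gT + (Finset.univ.gcd b - 1) * a₁ := by
  set d := Finset.univ.gcd b with hd
  rcases Nat.eq_zero_or_pos d with hd0 | hdpos
  · -- degenerate case: d = 0, hence k = 0 and a₁ = 1
    have hk : k = 0 := by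
      by_contra hk
      have hi : (⟨0, Nat.pos_of_ne_zero hk⟩ : Fin k) ∈ (Finset.univ : Finset (Fin k)) :=
        Finset.mem_univ _
      have hg0 : Finset.univ.gcd b = 0 := by rw [← hd]; exact hd0
      have hb0 : b ⟨0, Nat.pos_of_ne_zero hk⟩ = 0 :=
        (Finset.gcd_eq_zero_iff.mp hg0) _ hi
      exact absurd hb0 (hb _).ne'
    subst hk
    have ha1 : a₁ = 1 := by
      rw [hd0, Nat.gcd_zero_right] at hgcd
      exact hgcd
    subst ha1
    have hnum : ∀ n, numRep' 1 b n = 1 := by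
      intro n
      have hset : {xy : ℕ × (Fin 0 → ℕ) | 1 * xy.1 + ∑ i, b i * xy.2 i = n}
          = {(n, fun i => i.elim0)} := by
        ext ⟨x, y⟩
        simp only [Set.mem_setOf_eq, Set.mem_singleton_iff, Prod.mk.injEq]
        constructor
        · intro h
          refine ⟨by simpa using h, funext fun i => i.elim0⟩
        · rintro ⟨rfl, rfl⟩; simp
      rw [numRep', hset, Set.ncard_singleton]
    rcases Nat.eq_zero_or_pos p with hp | hp
    · subst hp
      exact absurd (by simp [Sp', hnum] : gA ∈ Sp' 0 1 b) hgA.1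
    · have : gA + 1 ∉ Sp' p 1 b := by
        simp only [Sp', Set.mem_setOf_eq, hnum, not_lt]
        omega
      have := hgA.2 _ this
      omega
  -- main case: d > 0
  set c : Fin k → ℕ := fun i => b i / d with hc
  have hbc : ∀ i, b i = d * c i := fun i =>
    (Nat.mul_div_cancel' (Finset.gcd_dvd (Finset.mem_univ i))).symm
  -- key scaling lemma for the number of representations
  have key : ∀ x₀ m, x₀ < d → numRep' a₁ b (d * m + a₁ * x₀) = numRep' a₁ c m := by
    intro x₀ m hx₀
    have hinj : Function.Injective
        (fun xy : ℕ × (Fin k → ℕ) => ((x₀ + d * xy.1, xy.2) : ℕ × (Fin k → ℕ))) := by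
      rintro ⟨s, u⟩ ⟨t, v⟩ h
      simp only [Prod.mk.injEq] at h
      obtain ⟨h1, h2⟩ := h
      have : d * s = d * t := by omega
      have := Nat.eq_of_mul_eq_mul_left hdpos this
      simp [this, h2]
    have himg : {xy : ℕ × (Fin k → ℕ) | a₁ * xy.1 + ∑ i, b i * xy.2 i = d * m + a₁ * x₀}
        = (fun xy : ℕ × (Fin k → ℕ) => ((x₀ + d * xy.1, xy.2) : ℕ × (Fin k → ℕ))) ''
          {xy : ℕ × (Fin k → ℕ) | a₁ * xy.1 + ∑ i, c i * xy.2 i = m} := by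
      ext ⟨x, y⟩
      simp only [Set.mem_setOf_eq, Set.mem_image, Prod.mk.injEq, Prod.exists]
      have hsum : ∑ i, b i * y i = d * ∑ i, c i * y i := by
        rw [Finset.mul_sum]
        exact Finset.sum_congr rfl fun i _ => by rw [hbc i, mul_assoc]
      constructor
      · intro h
        rw [hsum] at h
        set M := ∑ i, c i * y i with hM
        have h1 : (a₁ * x) % d = (a₁ * x₀) % d := by
          rw [← Nat.add_mul_mod_self_left (a₁ * x) d M, h, Nat.mul_add_mod]
        have hmod : x ≡ x₀ [MOD d] :=
          Nat.ModEq.cancel_left_of_coprime (Nat.coprime_comm.mp hgcd) h1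
        have hx₀x : x₀ ≤ x := by
          by_contra hlt
          push_neg at hlt
          have hdvd : d ∣ x₀ - x := (Nat.modEq_iff_dvd' hlt.le).mp hmod
          have := Nat.le_of_dvd (by omega) hdvd
          omega
        obtain ⟨t, ht⟩ : d ∣ x - x₀ := (Nat.modEq_iff_dvd' hx₀x).mp hmod.symm
        have hxe : x = x₀ + d * t := by omega
        refine ⟨t, y, ?_, hxe.symm, rfl⟩
        have h2 : d * (a₁ * t + M) = d * m := by
          rw [hxe] at h
          have : a₁ * (x₀ + d * t) = a₁ * x₀ + d * (a₁ * t) := by ring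
          rw [this] at h
          have : a₁ * x₀ + d * (a₁ * t) + d * M = a₁ * x₀ + d * (a₁ * t + M) := by ring
          rw [this] at h
          omega
        exact Nat.eq_of_mul_eq_mul_left hdpos h2
      · rintro ⟨t, y', hmem, hxe, rfl⟩
        subst hxe
        rw [hsum, ← hmem]
        ring
    rw [numRep', himg, Set.ncard_image_of_injective _ hinj, numRep']
  -- existence of the residue x₀
  haveI : NeZero d := ⟨hdpos.ne'⟩
  have decomp : ∀ n : ℕ, ∃ x₀, x₀ < d ∧ (a₁ * x₀) % d = n % d := by
    intro n
    have hu : IsUnit (a₁ : ZMod d) := by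
      rw [ZMod.isUnit_iff_coprime]
      exact hgcd
    refine ⟨((n : ZMod d) * (a₁ : ZMod d)⁻¹).val, ZMod.val_lt _, ?_⟩
    have hcast : ((a₁ * ((n : ZMod d) * (a₁ : ZMod d)⁻¹).val : ℕ) : ZMod d)
        = (n : ZMod d) := by
      push_cast
      rw [ZMod.natCast_val, ZMod.cast_id]
      rw [mul_comm (a₁ : ZMod d), mul_assoc, ZMod.inv_mul_of_unit _ hu, mul_one]
    exact (ZMod.natCast_eq_natCast_iff _ _ _).mp hcast
  -- the candidate maximum is not in Sp'
  have claim1 : d * gT + a₁ * (d - 1) ∉ Sp' p a₁ b := by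
    intro hmem
    have : p < numRep' a₁ b (d * gT + a₁ * (d - 1)) := hmem
    rw [key (d - 1) gT (by omega)] at this
    exact hgT.1 this
  -- every non-member is at most the candidate maximum
  have claim2 : ∀ n : ℕ, n ∉ Sp' p a₁ b → n ≤ d * gT + a₁ * (d - 1) := by
    intro n hn
    obtain ⟨x₀, hx₀d, hx₀mod⟩ := decomp n
    by_cases hle : a₁ * x₀ ≤ n
    · obtain ⟨m, hm⟩ : d ∣ n - a₁ * x₀ :=
        (Nat.modEq_iff_dvd' hle).mp hx₀mod
      have hne : n = d * m + a₁ * x₀ := by omega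
      have hmT : m ∉ Sp' p a₁ c := by
        intro hmem
        have : p < numRep' a₁ c m := hmem
        rw [← key x₀ m hx₀d] at this
        exact hn (by rw [hne]; exact this)
      have hmle : m ≤ gT := hgT.2 m hmT
      have : d * m ≤ d * gT := Nat.mul_le_mul_left d hmle
      have : a₁ * x₀ ≤ a₁ * (d - 1) := Nat.mul_le_mul_left a₁ (by omega)
      omega
    · push_neg at hle
      have : a₁ * x₀ ≤ a₁ * (d - 1) := Nat.mul_le_mul_left a₁ (by omega)
      omega
  have h1 : d * gT + a₁ * (d - 1) ≤ gA := hgA.2 _ claim1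
  have h2 : gA ≤ d * gT + a₁ * (d - 1) := claim2 gA hgA.1
  rw [mul_comm (d - 1) a₁]
  omega
end

section
/- With notation as in the Apéry set scaling result, the p-genera satisfy n_p(A) = d·n_p(A_d) + (d-1)(a_1-1)/2. -/
/-!
Let `d = gcd b` and `b = d • c`. As `gcd(a₁, d) = 1`, each `n` has a unique `x(n) < d`
(`residueDiv`) with `a₁ x(n) ≡ n (mod d)`, and every representation `n = a₁ x + ∑ bᵢ yᵢ` has
`x ≡ x(n) (mod d)`. So `n` has no representation when `n < a₁ x(n)`, and otherwise
`n = a₁ x(n) + d m`, where removing `x(n)` copies of `a₁` matches the representations of `n` by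
`(a₁, b)` with those of `m` by `(a₁, c)`. The `p`-gaps of `(a₁, b)` are therefore the
`n < a₁ x(n)`, of which there are `∑_{x<d} ⌊a₁ x / d⌋ = (d - 1)(a₁ - 1) / 2` (as
`x ↦ a₁ x mod d` permutes `range d`), together with the `d` disjoint copies `a₁ x + d • G`,
`x < d`, of the `p`-gaps `G` of `(a₁, c)`, a finite set because `gcd(a₁, c) = 1`.
-/

open Finset

noncomputable def residueDiv (a d n : ℕ) : ℕ := ((n : ZMod d) * (a : ZMod d)⁻¹).val

section residueDiv

variable {a d : ℕ}

theorem residueDiv_lt [NeZero d] (n : ℕ) : residueDiv a d n < d := ZMod.val_lt _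

theorem mul_residueDiv_modEq [NeZero d] (hcop : a.Coprime d) (n : ℕ) :
    a * residueDiv a d n ≡ n [MOD d] := by
  rw [← ZMod.natCast_eq_natCast_iff, residueDiv, Nat.cast_mul, ZMod.natCast_zmod_val,
    mul_left_comm, ZMod.coe_mul_inv_eq_one a hcop, mul_one]

theorem residueDiv_eq_mod_of_modEq (hcop : a.Coprime d) {n x : ℕ} (h : n ≡ a * x [MOD d]) :
    residueDiv a d n = x % d := by
  rw [residueDiv, (ZMod.natCast_eq_natCast_iff _ _ _).mpr h, Nat.cast_mul, mul_right_comm,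
    ZMod.coe_mul_inv_eq_one a hcop, one_mul, ZMod.val_natCast]

end residueDiv

theorem two_mul_sum_mul_div {a d : ℕ} (ha : 0 < a) (hcop : a.Coprime d) :
    2 * ∑ x ∈ range d, a * x / d = (d - 1) * (a - 1) := by
  rcases Nat.eq_zero_or_pos d with rfl | hd
  · simp
  have : NeZero d := ⟨hd.ne'⟩
  have hperm : ∑ x ∈ range d, a * x % d = ∑ x ∈ range d, x := by
    refine sum_nbij' (fun x => a * x % d) (residueDiv a d) (fun x _ => ?_) (fun r _ => ?_)
      (fun x hx => ?_) (fun r hr => ?_) (fun _ _ => rfl)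
    · exact mem_range.mpr (Nat.mod_lt _ hd)
    · exact mem_range.mpr (residueDiv_lt r)
    · rw [residueDiv_eq_mod_of_modEq hcop (Nat.mod_modEq _ _), Nat.mod_eq_of_lt (mem_range.mp hx)]
    · rw [mul_residueDiv_modEq hcop r, Nat.mod_eq_of_lt (mem_range.mp hr)]
  have hdiv : a * ∑ x ∈ range d, x = d * ∑ x ∈ range d, a * x / d + ∑ x ∈ range d, x := by
    calc a * ∑ x ∈ range d, x = ∑ x ∈ range d, (d * (a * x / d) + a * x % d) := by
          rw [mul_sum]; exact sum_congr rfl fun x _ => (Nat.div_add_mod _ _).symm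
      _ = _ := by rw [sum_add_distrib, hperm, mul_sum]
  have hgauss := sum_range_id_mul_two d
  obtain ⟨a, rfl⟩ := Nat.exists_eq_add_of_le' ha
  obtain ⟨e, rfl⟩ := Nat.exists_eq_add_of_le' hd
  simp only [Nat.add_sub_cancel] at hgauss ⊢
  apply Nat.eq_of_mul_eq_mul_left hd
  nlinarith

theorem two_mul_ncard_lt_mul_residueDiv {a d : ℕ} [NeZero d] (ha : 0 < a) (hcop : a.Coprime d) :
    2 * {n | n < a * residueDiv a d n}.ncard = (d - 1) * (a - 1) := by
  classical
  have hfin :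
      {n | n < a * residueDiv a d n} = ↑{n ∈ range (a * d) | n < a * residueDiv a d n} := by
    ext n
    simp only [Set.mem_ofPred_eq, coe_filter, mem_range]
    exact (and_iff_right_of_imp fun hn =>
      hn.trans_le (Nat.mul_le_mul_left a (residueDiv_lt n).le)).symm
  have hfiber (x : ℕ) (hx : x < d) :
      {n ∈ {n ∈ range (a * d) | n < a * residueDiv a d n} | residueDiv a d n = x} =
        {n ∈ range (a * x) | n ≡ a * x [MOD d]} := by
    ext n
    simp only [mem_filter, mem_range]
    constructor
    · rintro ⟨⟨-, hn⟩, rfl⟩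
      exact ⟨hn, (mul_residueDiv_modEq hcop n).symm⟩
    · rintro ⟨hn, hmod⟩
      have hx' : residueDiv a d n = x := by
        rw [residueDiv_eq_mod_of_modEq hcop hmod, Nat.mod_eq_of_lt hx]
      refine ⟨⟨hn.trans_le (Nat.mul_le_mul_left a hx.le), hx' ▸ hn⟩, hx'⟩
  rw [hfin, Set.ncard_coe_finset, card_eq_sum_card_fiberwise (f := residueDiv a d) (t := range d)
    (fun n _ => mem_range.mpr (residueDiv_lt n)), ← two_mul_sum_mul_div ha hcop]
  congr 1
  refine sum_congr rfl fun x hx => ?_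
  rw [hfiber x (mem_range.mp hx), ← Nat.count_eq_card_filter_range,
    Nat.count_modEq_card _ (NeZero.pos d)]
  simp

section finite

variable {k a : ℕ} {c : Fin k → ℕ}

theorem finite_setOf_rep (ha : 0 < a) (hc : ∀ i, 0 < c i) (n : ℕ) :
    {xy : ℕ × (Fin k → ℕ) | a * xy.1 + ∑ i, c i * xy.2 i = n}.Finite := by
  refine ((Set.finite_Iic n).prod (Set.Finite.pi fun _ => Set.finite_Iic n)).subset ?_
  rintro ⟨x, y⟩ hxy
  simp only [Set.mem_ofPred_eq] at hxy
  refine ⟨(Nat.le_mul_of_pos_left x ha).trans (by omega), fun i _ => ?_⟩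
  show y i ≤ n
  have := single_le_sum (f := fun j => c j * y j) (fun _ _ => Nat.zero_le _) (mem_univ i)
  exact (Nat.le_mul_of_pos_left _ (hc i)).trans (by omega)

/-- Adding `p * (a * c i)` to a representation of `m` as `j * c i` copies of `a` and `(p - j) * a`
copies of `c i`, for `j ≤ p`, gives `p + 1` distinct representations. -/
theorem lt_numRep'_add_mul (ha : 0 < a) (hc : ∀ i, 0 < c i) {m x : ℕ} {y : Fin k → ℕ}
    (hm : a * x + ∑ i, c i * y i = m) (p : ℕ) (i : Fin k) :
    p < numRep' a c (m + p * (a * c i)) := by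
  classical
  let rep : ℕ → ℕ × (Fin k → ℕ) := fun j => (x + j * c i, y + Pi.single i ((p - j) * a))
  have hrep : ∀ j ∈ range (p + 1), a * (rep j).1 + ∑ l, c l * (rep j).2 l = m + p * (a * c i) := by
    intro j hj
    obtain ⟨q, rfl⟩ := Nat.exists_eq_add_of_le (Nat.lt_succ_iff.mp (mem_range.mp hj))
    simp only [rep, Pi.add_apply, mul_add, sum_add_distrib, Pi.single_apply, mul_ite, mul_zero,
      sum_ite_eq', mem_univ, if_true, Nat.add_sub_cancel_left, ← hm]
    ring
  have hinj : Set.InjOn rep (range (p + 1)) := fun j _ j' _ h =>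
    Nat.eq_of_mul_eq_mul_right (hc i) (Nat.add_left_cancel (congrArg Prod.fst h))
  calc p < ((range (p + 1)).image rep).card := by
        rw [card_image_of_injOn hinj, card_range]; exact p.lt_succ_self
    _ ≤ numRep' a c (m + p * (a * c i)) := by
        rw [← Set.ncard_coe_finset]
        refine Set.ncard_le_ncard ?_ (finite_setOf_rep ha hc _)
        simpa [Set.subset_def] using hrep

theorem exists_rep_of_mem_closure {m : ℕ}
    (hm : m ∈ AddSubmonoid.closure (Set.range (Matrix.vecCons a c))) :
    ∃ (x : ℕ) (y : Fin k → ℕ), a * x + ∑ i, c i * y i = m := by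
  obtain ⟨z, rfl⟩ := AddSubmonoid.exists_of_mem_closure_range _ _ hm
  exact ⟨z 0, fun i => z i.succ, by simp [Fin.sum_univ_succ, mul_comm]⟩

theorem setGcd_range_vecCons (hcop : a.Coprime (univ.gcd c)) :
    Nat.setGcd (Set.range (Matrix.vecCons a c)) = 1 := by
  have hdvd := Nat.dvd_setGcd_iff.mp (dvd_refl (Nat.setGcd (Set.range (Matrix.vecCons a c))))
  rw [← Nat.dvd_one, ← hcop.gcd_eq_one]
  exact Nat.dvd_gcd (hdvd _ ⟨0, rfl⟩) (dvd_gcd fun i _ => hdvd _ ⟨i.succ, rfl⟩)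

theorem finite_compl_Sp' (p : ℕ) (ha : 0 < a) (hc : ∀ i, 0 < c i) (i : Fin k)
    (hcop : a.Coprime (univ.gcd c)) : (Sp' p a c)ᶜ.Finite := by
  obtain ⟨N, hN⟩ := Nat.exists_mem_closure_of_ge (Set.range (Matrix.vecCons a c))
  refine (Set.finite_Iio (N + p * (a * c i))).subset fun n hn => ?_
  by_contra hlt
  have hle : N + p * (a * c i) ≤ n := not_lt.mp hlt
  obtain ⟨x, y, hxy⟩ := exists_rep_of_mem_closure (hN (n - p * (a * c i)) (by omega)
    (by rw [setGcd_range_vecCons hcop]; exact one_dvd _))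
  have := lt_numRep'_add_mul ha hc hxy p i
  rw [Nat.sub_add_cancel (by omega)] at this
  exact hn this

end finite

section scaling

variable {k a d : ℕ} {c : Fin k → ℕ}

theorem residueDiv_mul_add_mul (hcop : a.Coprime d) {x : ℕ} (hx : x < d) (m : ℕ) :
    residueDiv a d (a * x + d * m) = x := by
  rw [residueDiv_eq_mod_of_modEq hcop (Nat.add_mul_mod_self_left _ _ _), Nat.mod_eq_of_lt hx]

theorem sum_mul_mul_eq_mul_sum (y : Fin k → ℕ) :
    ∑ i, d * c i * y i = d * ∑ i, c i * y i := by
  simp only [mul_sum, mul_assoc]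

theorem exists_eq_residueDiv_add_mul_of_rep (hcop : a.Coprime d) {n x : ℕ} {y : Fin k → ℕ}
    (h : a * x + ∑ i, d * c i * y i = n) : ∃ u, x = residueDiv a d n + d * u := by
  rw [sum_mul_mul_eq_mul_sum] at h
  refine ⟨x / d, ?_⟩
  rw [residueDiv_eq_mod_of_modEq hcop (h ▸ Nat.add_mul_mod_self_left _ _ _), Nat.mod_add_div]

theorem exists_eq_mul_residueDiv_add_mul [NeZero d] (hcop : a.Coprime d) {n : ℕ}
    (h : a * residueDiv a d n ≤ n) : ∃ m, n = a * residueDiv a d n + d * m := by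
  obtain ⟨m, hm⟩ := (Nat.modEq_iff_dvd' h).mp (mul_residueDiv_modEq hcop n)
  exact ⟨m, by omega⟩

theorem numRep'_eq_zero_of_lt_mul_residueDiv (hcop : a.Coprime d) {n : ℕ}
    (hn : n < a * residueDiv a d n) : numRep' a (fun i => d * c i) n = 0 := by
  rw [numRep']
  convert Set.ncard_empty (ℕ × (Fin k → ℕ))
  refine Set.eq_empty_of_forall_notMem ?_
  rintro ⟨x, y⟩ hxy
  obtain ⟨u, rfl⟩ := exists_eq_residueDiv_add_mul_of_rep hcop hxy
  have := Nat.mul_le_mul_left a (Nat.le_add_right (residueDiv a d n) (d * u))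
  simp only [Set.mem_ofPred_eq] at hxy
  omega

theorem numRep'_mul_add_mul [NeZero d] (hcop : a.Coprime d) {x : ℕ} (hx : x < d) (m : ℕ) :
    numRep' a (fun i => d * c i) (a * x + d * m) = numRep' a c m := by
  have hset : {xy : ℕ × (Fin k → ℕ) | a * xy.1 + ∑ i, d * c i * xy.2 i = a * x + d * m} =
      (fun uy : ℕ × (Fin k → ℕ) => (x + d * uy.1, uy.2)) ''
        {uy | a * uy.1 + ∑ i, c i * uy.2 i = m} := by
    ext ⟨x', y⟩
    simp only [Set.mem_ofPred_eq, Set.mem_image, Prod.mk.injEq, Prod.exists]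
    constructor
    · intro h
      obtain ⟨u, rfl⟩ := exists_eq_residueDiv_add_mul_of_rep hcop h
      rw [residueDiv_mul_add_mul hcop hx] at h ⊢
      rw [sum_mul_mul_eq_mul_sum] at h
      refine ⟨u, y, Nat.eq_of_mul_eq_mul_left (NeZero.pos d) ?_, rfl, rfl⟩
      linarith
    · rintro ⟨u, y, h, rfl, rfl⟩
      rw [sum_mul_mul_eq_mul_sum, ← h]
      ring
  rw [numRep', numRep', hset, Set.ncard_image_of_injective]
  rintro ⟨u, y⟩ ⟨u', y'⟩ h
  simp only [Prod.mk.injEq, add_right_inj, mul_eq_mul_left_iff, NeZero.ne d, or_false] at h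
  rw [h.1, h.2]

end scaling

theorem two_mul_ncard_compl_Sp'_mul (p : ℕ) {k a d : ℕ} [NeZero d] (ha : 0 < a)
    (hcop : a.Coprime d) {c : Fin k → ℕ} (hfin : (Sp' p a c)ᶜ.Finite) :
    2 * (Sp' p a fun i => d * c i)ᶜ.ncard = 2 * d * (Sp' p a c)ᶜ.ncard + (d - 1) * (a - 1) := by
  set F := {n | n < a * residueDiv a d n}
  set G := (fun q : ℕ × ℕ => a * q.1 + d * q.2) '' (Set.Iio d ×ˢ (Sp' p a c)ᶜ)
  have hinj : Set.InjOn (fun q : ℕ × ℕ => a * q.1 + d * q.2) (Set.Iio d ×ˢ Set.univ) := by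
    rintro ⟨x, m⟩ ⟨hx : x < d, -⟩ ⟨x', m'⟩ ⟨hx' : x' < d, -⟩ h
    obtain rfl : x = x' := by
      rw [← residueDiv_mul_add_mul hcop hx m, ← residueDiv_mul_add_mul hcop hx' m']
      exact congrArg _ h
    simpa [NeZero.ne d] using h
  have hsplit : (Sp' p a fun i => d * c i)ᶜ = F ∪ G := by
    ext n
    simp only [Set.mem_compl_iff, Sp', Set.mem_ofPred_eq, Set.mem_union, F, G, Set.mem_image,
      Set.mem_prod, Set.mem_Iio, Prod.exists]
    constructor
    · intro hn
      refine (lt_or_ge n (a * residueDiv a d n)).imp id fun hle => ?_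
      obtain ⟨m, hm⟩ := exists_eq_mul_residueDiv_add_mul hcop hle
      refine ⟨residueDiv a d n, m, ⟨residueDiv_lt n, ?_⟩, hm.symm⟩
      rwa [← numRep'_mul_add_mul hcop (residueDiv_lt n), ← hm]
    · rintro (hlt | ⟨x, m, ⟨hx, hm⟩, rfl⟩)
      · rw [numRep'_eq_zero_of_lt_mul_residueDiv hcop hlt]
        exact Nat.not_lt_zero p
      · rwa [numRep'_mul_add_mul hcop hx]
  have hdisj : Disjoint F G := by
    rw [Set.disjoint_left]
    rintro _ hlt ⟨⟨x, m⟩, ⟨hx, -⟩, rfl⟩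
    simp only [F, Set.mem_ofPred_eq, residueDiv_mul_add_mul hcop hx] at hlt
    omega
  have hFfin : F.Finite := (Set.finite_Iio (a * d)).subset fun n (hn : n < _) =>
    hn.trans_le (Nat.mul_le_mul_left a (residueDiv_lt n).le)
  have hGcard : G.ncard = d * (Sp' p a c)ᶜ.ncard := by
    rw [(hinj.mono (Set.prod_mono le_rfl (Set.subset_univ _))).ncard_image, Set.ncard_prod,
      Set.ncard_Iio_nat]
  rw [hsplit, Set.ncard_union_eq hdisj hFfin (((Set.finite_Iio d).prod hfin).image _), mul_add,
    two_mul_ncard_lt_mul_residueDiv ha hcop, hGcard]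
  ring

theorem ncard_compl_Sp'_one_of_isEmpty {k : ℕ} [IsEmpty (Fin k)] (p : ℕ) (b : Fin k → ℕ) :
    (Sp' p 1 b)ᶜ.ncard = 0 := by
  -- for `p ≥ 1` the complement is all of `ℕ`, whose `Set.ncard` is `0` since it is infinite
  have hrep (n : ℕ) : numRep' 1 b n = 1 := by
    rw [numRep', Set.ncard_eq_one]
    exact ⟨(n, isEmptyElim), Set.ext fun xy => by simp [Prod.ext_iff, funext_iff]⟩
  by_cases hp : p < 1
  · simp [Sp', hrep, hp]
  · simp [Sp', hrep, hp, Set.Infinite.ncard Set.infinite_univ]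

theorem stmt_13_general (k p a₁ : ℕ) (b : Fin k → ℕ) (ha₁ : 0 < a₁) (hb : ∀ i, 0 < b i)
    (hgcd : Nat.gcd a₁ (Finset.univ.gcd b) = 1) :
    2 * Set.ncard {n : ℕ | n ∉ Sp' p a₁ b} =
      2 * Finset.univ.gcd b *
          Set.ncard {n : ℕ | n ∉ Sp' p a₁ (fun i => b i / Finset.univ.gcd b)} +
        (Finset.univ.gcd b - 1) * (a₁ - 1) := by
  rcases isEmpty_or_nonempty (Fin k) with hk | ⟨⟨i₀⟩⟩
  · have hd : univ.gcd b = 0 := by simp [univ_eq_empty]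
    obtain rfl : a₁ = 1 := by simpa [hd] using hgcd
    rw [hd, zero_tsub, zero_mul, mul_zero, zero_mul, add_zero]
    exact mul_eq_zero_of_right 2 (ncard_compl_Sp'_one_of_isEmpty p b)
  set d := univ.gcd b
  have : NeZero d := ⟨fun h => (hb i₀).ne' (Finset.gcd_eq_zero_iff.mp h i₀ (mem_univ _))⟩
  have hb_eq : b = fun i => d * (b i / d) :=
    funext fun i => (Nat.mul_div_cancel' (gcd_dvd (mem_univ i))).symm
  have hc (i : Fin k) : 0 < b i / d :=
    Nat.div_pos (Nat.le_of_dvd (hb i) (gcd_dvd (mem_univ i))) (NeZero.pos d)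
  have hcop : a₁.Coprime (univ.gcd fun i => b i / d) := by
    rw [gcd_div_eq_one (mem_univ i₀) (hb i₀).ne']
    exact Nat.coprime_one_right a₁
  have key := two_mul_ncard_compl_Sp'_mul p ha₁ hgcd (finite_compl_Sp' p ha₁ hc i₀ hcop)
  rw [← hb_eq] at key
  exact key

theorem stmt_13 (k p a₁ : ℕ) (b : Fin k → ℕ) (ha₁ : 0 < a₁) (hb : ∀ i, 0 < b i)
    (hgcd : Nat.gcd a₁ (Finset.univ.gcd b) = 1)
    (hmin₁ : a₁ ∉ AddSubmonoid.closure (Set.range b))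
    (hminb : ∀ i, b i ∉ AddSubmonoid.closure ({a₁} ∪ b '' {j | j ≠ i})) :
    2 * Set.ncard {n : ℕ | n ∉ Sp' p a₁ b} =
      2 * Finset.univ.gcd b *
          Set.ncard {n : ℕ | n ∉ Sp' p a₁ (fun i => b i / Finset.univ.gcd b)} +
        (Finset.univ.gcd b - 1) * (a₁ - 1) :=
  stmt_13_general k p a₁ b ha₁ hb hgcd
end

section
/- Let A = {a_1,...,a_k} with gcd 1, a_1 = min(A), p ≥ 0, and m_i^{(p)} as in the p-Apéry set. Then n_p(A) = (1/a_1)·Σ_{i=0}^{a_1−1} m_i^{(p)} − (a_1−1)/2. -/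
open Finset

theorem finite_setOf_sum_mul_eq {ι : Type*} [Fintype ι] {a : ι → ℕ}
    (ha : ∀ i, 0 < a i) (n : ℕ) : {x : ι → ℕ | ∑ i, a i * x i = n}.Finite := by
  refine (Set.Finite.pi fun _ => Set.finite_Iic n).subset fun x hx i _ => ?_
  calc x i ≤ a i * x i := Nat.le_mul_of_pos_left _ (ha i)
    _ ≤ ∑ j, a j * x j :=
      single_le_sum (f := fun j => a j * x j) (fun _ _ => Nat.zero_le _) (mem_univ i)
    _ = n := hx

theorem numRep_le_numRep_add {k : ℕ} {a : Fin k → ℕ} (ha : ∀ i, 0 < a i) (j : Fin k) (n : ℕ) :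
    numRep k a n ≤ numRep k a (n + a j) := by
  refine Set.ncard_le_ncard_of_injOn (fun x => x + Pi.single j 1) (fun x hx => ?_)
    (fun x _ y _ h => add_right_cancel h) (finite_setOf_sum_mul_eq ha _)
  simpa [mul_add, sum_add_distrib, Pi.single_apply] using hx

theorem add_mem_Sp {k p : ℕ} {a : Fin k → ℕ} (ha : ∀ i, 0 < a i) (j : Fin k) {n : ℕ}
    (hn : n ∈ Sp k p a) : n + a j ∈ Sp k p a :=
  hn.trans_le (numRep_le_numRep_add ha j n)

section ResidueClasses

variable {S : Set ℕ} {d : ℕ} {m : ℕ → ℕ}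

theorem add_mul_mem_of_add_mem (hS : ∀ n ∈ S, n + d ∈ S) {n : ℕ} (hn : n ∈ S) (t : ℕ) :
    n + d * t ∈ S := by
  induction t with
  | zero => simpa using hn
  | succ t ih => simpa [mul_add, add_assoc] using hS _ ih

theorem mem_iff_le_of_isLeast (hd : 0 < d) (hS : ∀ n ∈ S, n + d ∈ S)
    (hm : ∀ i < d, IsLeast {n ∈ S | n % d = i} (m i)) (n : ℕ) :
    n ∈ S ↔ m (n % d) ≤ n := by
  obtain ⟨⟨hmS, hmod⟩, hleast⟩ := hm _ (Nat.mod_lt n hd)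
  refine ⟨fun hn => hleast ⟨hn, rfl⟩, fun hle => ?_⟩
  obtain ⟨t, ht⟩ := (Nat.modEq_iff_dvd' hle).mp hmod
  simpa [← ht, Nat.add_sub_cancel' hle] using add_mul_mem_of_add_mem hS hmS t

theorem lt_iff_div_lt_div_of_mod_eq {a b d : ℕ} (h : a % d = b % d) : a < b ↔ a / d < b / d := by
  have ha := Nat.div_add_mod a d
  have hb := Nat.div_add_mod b d
  refine ⟨fun hab => ?_, Nat.lt_of_div_lt_div⟩
  by_contra! hdiv
  have := Nat.mul_le_mul_left d hdiv
  omega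

theorem ncard_compl_eq_sum_div (hd : 0 < d) (hS : ∀ n ∈ S, n + d ∈ S)
    (hm : ∀ i < d, IsLeast {n ∈ S | n % d = i} (m i)) :
    Sᶜ.ncard = ∑ i ∈ range d, m i / d := by
  have hcompl (n : ℕ) : n ∉ S ↔ n / d < m (n % d) / d := by
    rw [mem_iff_le_of_isLeast hd hS hm, not_le,
      lt_iff_div_lt_div_of_mod_eq (hm _ (Nat.mod_lt n hd)).1.2.symm]
  have hcard : ∑ i ∈ range d, m i / d = #((range d).sigma fun i => range (m i / d)) := by
    simp [card_sigma]
  rw [hcard, ← Set.ncard_coe_finset]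
  refine Set.ncard_congr (fun n _ => ⟨n % d, n / d⟩) (fun n hn => ?_) (fun n n' _ _ h => ?_)
    (fun ⟨i, j⟩ hij => ?_)
  · simpa [Nat.mod_lt n hd] using (hcompl n).mp hn
  · simp only [Sigma.mk.injEq, heq_eq_eq] at h
    rw [← Nat.mod_add_div n d, ← Nat.mod_add_div n' d, h.1, h.2]
  · simp only [coe_sigma, Set.mem_sigma_iff, coe_range, Set.mem_Iio] at hij
    have hmod : (i + d * j) % d = i := by rw [Nat.add_mul_mod_self_left, Nat.mod_eq_of_lt hij.1]
    have hdiv : (i + d * j) / d = j := by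
      rw [Nat.add_mul_div_left _ _ hd, Nat.div_eq_of_lt hij.1, zero_add]
    exact ⟨i + d * j, (hcompl _).mpr (by rw [hmod, hdiv]; exact hij.2), by rw [hmod, hdiv]⟩

theorem two_mul_sum_eq_of_isLeast (hd : 0 < d) (hS : ∀ n ∈ S, n + d ∈ S)
    (hm : ∀ i < d, IsLeast {n ∈ S | n % d = i} (m i)) :
    2 * ∑ i ∈ range d, m i = 2 * d * Sᶜ.ncard + d * (d - 1) := by
  have hdecomp : ∀ i ∈ range d, m i = i + d * (m i / d) := fun i hi => by
    conv_lhs => rw [← Nat.mod_add_div (m i) d, (hm i (mem_range.mp hi)).1.2]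
  rw [sum_congr rfl hdecomp, sum_add_distrib, ← mul_sum, ncard_compl_eq_sum_div hd hS hm,
    ← sum_range_id_mul_two]
  ring

end ResidueClasses

theorem stmt_15_general (k p : ℕ) (a : Fin (k + 1) → ℕ) (m : ℕ → ℕ)
    (ha : ∀ i, 0 < a i)
    (hm : ∀ i < a 0, IsLeast {n ∈ Sp (k + 1) p a | n % a 0 = i} (m i)) :
    2 * ∑ i ∈ Finset.range (a 0), m i =
      2 * a 0 * Set.ncard {n : ℕ | n ∉ Sp (k + 1) p a} + a 0 * (a 0 - 1) :=
  two_mul_sum_eq_of_isLeast (ha 0) (fun _ hn => add_mem_Sp ha 0 hn) hm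

theorem stmt_15 (k p : ℕ) (a : Fin (k + 1) → ℕ) (m : ℕ → ℕ)
    (ha : ∀ i, 0 < a i) (hgcd : Finset.univ.gcd a = 1)
    (hmin : ∀ i, a 0 ≤ a i)
    (hm : ∀ i < a 0, IsLeast {n ∈ Sp (k + 1) p a | n % a 0 = i} (m i)) :
    2 * ∑ i ∈ Finset.range (a 0), m i =
      2 * a 0 * Set.ncard {n : ℕ | n ∉ Sp (k + 1) p a} + a 0 * (a 0 - 1) :=
  stmt_15_general k p a m ha hm
end

section
/- Let a ≥ 4 be an even integer, d > 0 with gcd(a,d) = 1, and p = a/2 − 1. Then the p-numerical semigroup S_p(a, a+d, a+2d) is p-symmetric, i.e., n_p = (g_p + ℓ_0(p) + 1)/2 where g_p(a,a+d,a+2d) = (a+2d)p + ((a−2)/2)a + (a−1)d, n_p = (2a+2d−1−p)p + ((a−1)(a+2d−1)+1)/4, and ℓ_0(p) = 2p(a+d). -/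
/-!
Since `a x + (a + d) y + (a + 2d) z = a u + d v` with `u = x + y + z` and `v = y + 2z`, the
representations of `n` split into fibers over the pairs `(u, v)` with `a u + d v = n`; the fiber over
`(u, v)` has `v / 2 + 1 - (v - u)` elements, and as `gcd(a, d) = 1` the admissible pairs form one
progression `(u - d k, v + a k)`. For `s < a`, at most two of these fibers are nonempty at
`threshold a d s` and at `threshold a d s - a`, and counting them gives `a / 2` and `a / 2 - 1`
representations respectively. Since adding `a` never loses representations, `S_p` (`p = a / 2 - 1`)
consists, in the residue class of `d s` modulo `a`, of exactly the numbers above `threshold a d s`.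
Hence `ℓ₀(p)` is the least threshold, `g_p` is the largest threshold minus `a`, and Selmer's formula
`n_p = ∑ₛ ⌊threshold a d s / a⌋` evaluates `n_p`; `p`-symmetry is then an identity between these
closed forms.
-/

/-- number of representations of `n` by the arithmetic triple `a, a+d, a+2d`. -/
noncomputable def numRep3 (a d n : ℕ) : ℕ :=
  Set.ncard {x : ℕ × ℕ × ℕ | a * x.1 + (a + d) * x.2.1 + (a + 2 * d) * x.2.2 = n}

def Sp3 (p a d : ℕ) : Set ℕ := {n : ℕ | p < numRep3 a d n}

open Finset

theorem sum_range_mod_two (n : ℕ) : ∑ s ∈ range n, s % 2 = n / 2 := by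
  induction n with
  | zero => rfl
  | succ n ih =>
    rw [sum_range_succ, ih]
    omega

theorem sum_range_ite_lt {c n : ℕ} (hcn : c ≤ n) (K : ℕ) :
    ∑ s ∈ range n, (if s < c then K else 0) = c * K := by
  rw [← sum_filter, show (range n).filter (· < c) = range c by ext; simp; omega,
    sum_const, card_range, smul_eq_mul]

section ResidueThresholds

variable {a : ℕ} {T : ℕ → ℕ} {S : Set ℕ}

theorem image_range_mod_eq_range (ha : 0 < a) (hT : Set.InjOn (fun s => T s % a) (Set.Iio a)) :
    (range a).image (fun s => T s % a) = range a := by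
  refine eq_of_subset_of_card_le (fun r hr => ?_) ?_
  · obtain ⟨s, -, rfl⟩ := mem_image.mp hr
    exact mem_range.mpr (Nat.mod_lt _ ha)
  · rw [card_image_of_injOn (by rwa [coe_range])]

theorem exists_lt_modEq (ha : 0 < a) (hT : Set.InjOn (fun s => T s % a) (Set.Iio a)) (n : ℕ) :
    ∃ s < a, n ≡ T s [MOD a] := by
  have hn : n % a ∈ (range a).image (fun s => T s % a) := by
    rw [image_range_mod_eq_range ha hT]
    exact mem_range.mpr (Nat.mod_lt _ ha)
  obtain ⟨s, hs, hsn⟩ := mem_image.mp hn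
  exact ⟨s, mem_range.mp hs, hsn.symm⟩

theorem mul_sum_div_add_sum_range (ha : 0 < a) (hT : Set.InjOn (fun s => T s % a) (Set.Iio a)) :
    a * ∑ s ∈ range a, T s / a + ∑ s ∈ range a, s = ∑ s ∈ range a, T s := by
  have hmod : ∑ s ∈ range a, T s % a = ∑ s ∈ range a, s := by
    conv_rhs => rw [← image_range_mod_eq_range ha hT]
    exact (sum_image (f := id) (by rwa [coe_range])).symm
  rw [mul_sum, ← hmod, ← sum_add_distrib]
  exact sum_congr rfl fun s _ => Nat.div_add_mod (T s) a

theorem exists_add_le_of_notMem (ha : 0 < a) (hT : Set.InjOn (fun s => T s % a) (Set.Iio a))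
    (hS : ∀ s < a, ∀ n, n ≡ T s [MOD a] → (n ∈ S ↔ T s ≤ n)) {n : ℕ} (hn : n ∉ S) :
    ∃ s < a, n ≡ T s [MOD a] ∧ n + a ≤ T s := by
  obtain ⟨s, hs, hns⟩ := exists_lt_modEq ha hT n
  exact ⟨s, hs, hns, hns.add_le_of_lt (not_le.mp fun h => hn ((hS s hs n hns).mpr h))⟩

theorem ncard_setOf_notMem (ha : 0 < a) (hT : Set.InjOn (fun s => T s % a) (Set.Iio a))
    (hS : ∀ s < a, ∀ n, n ≡ T s [MOD a] → (n ∈ S ↔ T s ≤ n)) :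
    {n | n ∉ S}.ncard = ∑ s ∈ range a, T s / a := by
  have hgaps : {n | n ∉ S} = (fun x : (_ : ℕ) × ℕ => T x.1 % a + a * x.2) ''
      ↑((range a).sigma fun s => range (T s / a)) := by
    ext n
    simp only [Set.mem_ofPred_eq, Set.mem_image, mem_coe, mem_sigma, mem_range, Sigma.exists]
    constructor
    · intro hn
      obtain ⟨s, hs, hns, hlt⟩ := exists_add_le_of_notMem ha hT hS hn
      refine ⟨s, n / a, ⟨hs, ?_⟩, ?_⟩
      · calc n / a < n / a + 1 := Nat.lt_succ_self _
          _ = (n + a) / a := (Nat.add_div_right n ha).symm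
          _ ≤ T s / a := Nat.div_le_div_right hlt
      · rw [← hns]
        exact Nat.mod_add_div n a
    · rintro ⟨s, j, ⟨hs, hj⟩, rfl⟩
      rw [hS s hs _ (by simp [Nat.ModEq])]
      have hTs := Nat.mod_add_div (T s) a
      have hj' : a * (j + 1) ≤ a * (T s / a) := Nat.mul_le_mul_left a hj
      nlinarith
  rw [hgaps, Set.InjOn.ncard_image, Set.ncard_coe_finset, card_sigma]
  · simp only [card_range]
  · rintro ⟨s, j⟩ hs ⟨s', j'⟩ hs' h
    simp only [mem_coe, mem_sigma, mem_range] at hs hs' h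
    have hmod : T s % a = T s' % a := by
      simpa [Nat.add_mul_mod_self_left] using congrArg (· % a) h
    obtain rfl : s = s' := hT hs.1 hs'.1 hmod
    rw [hmod, Nat.add_left_cancel_iff] at h
    rw [Nat.eq_of_mul_eq_mul_left ha h]

end ResidueThresholds

namespace ArithTriple

variable {a d : ℕ}

def reps (a d n : ℕ) : Set (ℕ × ℕ × ℕ) :=
  {x | a * x.1 + (a + d) * x.2.1 + (a + 2 * d) * x.2.2 = n}

theorem numRep3_eq_ncard_reps (a d n : ℕ) : numRep3 a d n = (reps a d n).ncard := rfl

theorem reps_finite (ha : 0 < a) (d n : ℕ) : (reps a d n).Finite := by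
  refine (Set.finite_Icc (0, 0, 0) (n, n, n)).subset fun x hx => ?_
  simp only [reps, Set.mem_ofPred_eq] at hx
  refine ⟨⟨Nat.zero_le _, Nat.zero_le _, Nat.zero_le _⟩, ?_, ?_, ?_⟩ <;> dsimp only <;> nlinarith

theorem ncard_reps_le_add_mul (ha : 0 < a) (d n k : ℕ) :
    (reps a d n).ncard ≤ (reps a d (n + a * k)).ncard := by
  refine Set.ncard_le_ncard_of_injOn (fun x => (x.1 + k, x.2)) (fun x hx => ?_)
    (fun x _ y _ h => ?_) (reps_finite ha d _)
  · simp only [reps, Set.mem_ofPred_eq] at hx ⊢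
    rw [← hx]
    ring
  · simp only [Prod.mk.injEq, add_left_inj] at h
    exact Prod.ext h.1 h.2

def fiber (u v : ℕ) : Finset (ℕ × ℕ × ℕ) :=
  (Icc (v - u) (v / 2)).image fun z => (u + z - v, v - 2 * z, z)

theorem mem_fiber {u v : ℕ} {x : ℕ × ℕ × ℕ} :
    x ∈ fiber u v ↔ x.1 + x.2.1 + x.2.2 = u ∧ x.2.1 + 2 * x.2.2 = v := by
  obtain ⟨x, y, z⟩ := x
  simp only [fiber, mem_image, mem_Icc, Prod.mk.injEq]
  constructor
  · rintro ⟨z, ⟨h1, h2⟩, rfl, rfl, rfl⟩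
    omega
  · rintro ⟨rfl, rfl⟩
    exact ⟨z, ⟨by omega, by omega⟩, by omega, by omega, rfl⟩

theorem card_fiber (u v : ℕ) : (fiber u v).card = v / 2 + 1 - (v - u) := by
  rw [fiber, card_image_of_injOn, Nat.card_Icc]
  intro z _ z' _ h
  exact congrArg (fun x : ℕ × ℕ × ℕ => x.2.2) h

theorem fiber_subset_reps (a d u v : ℕ) :
    (fiber u v : Set (ℕ × ℕ × ℕ)) ⊆ reps a d (a * u + d * v) := by
  intro x hx
  obtain ⟨rfl, rfl⟩ := mem_fiber.mp hx
  simp only [reps, Set.mem_ofPred_eq]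
  ring

theorem exists_int_of_mem_reps (ha : 0 < a) (hgcd : Nat.gcd a d = 1) {A B : ℕ} {x : ℕ × ℕ × ℕ}
    (hx : x ∈ reps a d (a * A + d * B)) :
    ∃ k : ℤ, (x.2.1 + 2 * x.2.2 : ℤ) = B + a * k ∧ (x.1 + x.2.1 + x.2.2 : ℤ) = A - d * k := by
  have hx' : (a : ℤ) * x.1 + (a + d) * x.2.1 + (a + 2 * d) * x.2.2 = a * A + d * B := by
    exact_mod_cast hx
  have hdvd : (a : ℤ) ∣ d * (x.2.1 + 2 * x.2.2 - B) := ⟨A - x.1 - x.2.1 - x.2.2, by linarith⟩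
  have hco : IsCoprime (a : ℤ) d := Int.isCoprime_iff_gcd_eq_one.mpr (by simpa using hgcd)
  obtain ⟨k, hk⟩ := hco.dvd_of_dvd_mul_left hdvd
  refine ⟨k, by linarith, mul_left_cancel₀ (by exact_mod_cast ha.ne' : (a : ℤ) ≠ 0) ?_⟩
  linear_combination hx' - d * hk

theorem exists_fiber_of_mem_reps (ha : 0 < a) (hgcd : Nat.gcd a d = 1) {A B : ℕ}
    (hA : 2 * A < B + a + 2 * d) {x : ℕ × ℕ × ℕ} (hx : x ∈ reps a d (a * A + d * B)) :
    ∃ j, a * j ≤ B ∧ x ∈ fiber (A + d * j) (B - a * j) := by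
  obtain ⟨k, hv, hu⟩ := exists_int_of_mem_reps ha hgcd hx
  have hk : k ≤ 0 := by
    by_contra! hk
    have : 0 ≤ ((a : ℤ) + 2 * d) * (k - 1) := mul_nonneg (by positivity) (by linarith)
    have : (0 : ℤ) ≤ x.1 := by positivity
    have : (2 * A : ℤ) < B + a + 2 * d := by exact_mod_cast hA
    nlinarith
  obtain ⟨j, rfl⟩ : ∃ j : ℕ, k = -j := ⟨k.natAbs, by omega⟩
  have hj : a * j ≤ B := by
    have : (0 : ℤ) ≤ x.2.1 + 2 * x.2.2 := by positivity
    zify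
    linarith
  refine ⟨j, hj, mem_fiber.mpr ⟨?_, ?_⟩⟩
  · zify
    linarith
  · zify [hj]
    linarith

theorem reps_eq_fiber (ha : 0 < a) (hgcd : Nat.gcd a d = 1) {A B : ℕ} (hB : B < a)
    (hA : 2 * A < B + a + 2 * d) : reps a d (a * A + d * B) = fiber A B := by
  refine subset_antisymm (fun x hx => ?_) (fiber_subset_reps a d A B)
  obtain ⟨j, hj, hx⟩ := exists_fiber_of_mem_reps ha hgcd hA hx
  obtain rfl : j = 0 := Nat.lt_one_iff.mp (Nat.lt_of_mul_lt_mul_left (by omega : a * j < a * 1))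
  simpa using hx

theorem reps_eq_fiber_union (ha : 0 < a) (hgcd : Nat.gcd a d = 1) {A B : ℕ} (haB : a ≤ B)
    (hB : B < 2 * a) (hA : 2 * A < B + a + 2 * d) :
    reps a d (a * A + d * B) = ↑(fiber (A + d) (B - a) ∪ fiber A B) := by
  refine subset_antisymm (fun x hx => ?_) ?_
  · obtain ⟨j, hj, hx⟩ := exists_fiber_of_mem_reps ha hgcd hA hx
    have : j < 2 := Nat.lt_of_mul_lt_mul_left (by omega : a * j < a * 2)
    interval_cases j <;> simp_all
  · rw [coe_union, Set.union_subset_iff]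
    refine ⟨?_, fiber_subset_reps a d A B⟩
    convert fiber_subset_reps a d (A + d) (B - a) using 2
    zify [haB]
    ring

def threshold (a d s : ℕ) : ℕ :=
  a * (a - 2 + s % 2) + d * s + if s < a - 2 then d * a else 0

theorem threshold_modEq (a d s : ℕ) : threshold a d s ≡ d * s [MOD a] := by
  have h : threshold a d s = d * s + a * (a - 2 + s % 2 + if s < a - 2 then d else 0) := by
    rw [threshold]
    split_ifs <;> ring
  rw [h]
  exact Nat.add_mul_mod_self_left _ _ _

theorem threshold_mod_injOn (hgcd : Nat.gcd a d = 1) :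
    Set.InjOn (fun s => threshold a d s % a) (Set.Iio a) := fun s hs s' hs' h =>
  ((threshold_modEq a d s).symm.trans ((h : _ ≡ _ [MOD a]).trans (threshold_modEq a d s'))
    |>.cancel_left_of_coprime hgcd).eq_of_lt_of_lt hs hs'

theorem ncard_reps_threshold_sub_mul (ha : 4 ≤ a) (hae : 2 ∣ a) (hd : 0 < d)
    (hgcd : Nat.gcd a d = 1) {s c : ℕ} (hs : s < a) (hc : c ≤ 1) :
    (reps a d (threshold a d s - a * c)).ncard = a / 2 - c := by
  have hac : a * c ≤ a * (a - 2 + s % 2) := Nat.mul_le_mul_left a (by omega)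
  by_cases h : s < a - 2
  · have hT : threshold a d s - a * c = a * (a - 2 + s % 2 - c) + d * (s + a) := by
      rw [threshold, if_pos h, Nat.mul_sub, mul_add d s a]
      omega
    have hdisj :
        Disjoint (fiber (a - 2 + s % 2 - c + d) (s + a - a)) (fiber (a - 2 + s % 2 - c) (s + a)) :=
      disjoint_left.mpr fun x h1 h2 => by rw [mem_fiber] at h1 h2; omega
    rw [hT, reps_eq_fiber_union (by omega) hgcd (by omega) (by omega) (by omega),
      Set.ncard_coe_finset, card_union_of_disjoint hdisj, card_fiber, card_fiber]
    omega
  · have hT : threshold a d s - a * c = a * (a - 2 + s % 2 - c) + d * s := by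
      rw [threshold, if_neg h, Nat.mul_sub]
      omega
    rw [hT, reps_eq_fiber (by omega) hgcd hs (by omega), Set.ncard_coe_finset, card_fiber]
    omega

theorem mem_Sp3_iff (ha : 4 ≤ a) (hae : 2 ∣ a) (hd : 0 < d) (hgcd : Nat.gcd a d = 1) {s n : ℕ}
    (hs : s < a) (hn : n ≡ threshold a d s [MOD a]) :
    n ∈ Sp3 (a / 2 - 1) a d ↔ threshold a d s ≤ n := by
  have hcard {c} (hc : c ≤ 1) := ncard_reps_threshold_sub_mul ha hae hd hgcd hs hc
  simp only [Sp3, Set.mem_ofPred_eq, numRep3_eq_ncard_reps]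
  constructor
  · intro h
    by_contra! hlt
    have hle := hn.add_le_of_lt hlt
    obtain ⟨k, hk⟩ := (Nat.modEq_iff_dvd' hle).mp (Nat.add_modulus_modEq_iff.mpr hn)
    have := ncard_reps_le_add_mul (a := a) (by omega) d n k
    rw [show n + a * k = threshold a d s - a * 1 by omega, hcard le_rfl] at this
    omega
  · intro h
    obtain ⟨k, hk⟩ := (Nat.modEq_iff_dvd' h).mp hn.symm
    have := ncard_reps_le_add_mul (a := a) (by omega) d (threshold a d s - a * 0) k
    rw [hcard (Nat.zero_le 1), show threshold a d s - a * 0 + a * k = n by omega] at this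
    omega

theorem threshold_sub_two (ha : 2 ≤ a) (hae : 2 ∣ a) (d : ℕ) :
    threshold a d (a - 2) = (a - 2) * (a + d) := by
  rw [threshold, if_neg (lt_irrefl _), show (a - 2) % 2 = 0 by omega]
  ring

theorem threshold_sub_three (ha : 4 ≤ a) (hae : 2 ∣ a) (d : ℕ) :
    threshold a d (a - 3) = a * (a - 1) + d * (2 * a - 3) := by
  rw [threshold, if_pos (by omega), show a - 2 + (a - 3) % 2 = a - 1 by omega]
  zify [show 3 ≤ a by omega, show 3 ≤ 2 * a by omega, show 1 ≤ a by omega]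
  ring

theorem threshold_sub_two_le (ha : 2 ≤ a) (hae : 2 ∣ a) (s : ℕ) :
    threshold a d (a - 2) ≤ threshold a d s := by
  have hda : (a - 2) * a ≤ a * (a - 2 + s % 2) := by
    rw [mul_comm]
    exact Nat.mul_le_mul_left a (Nat.le_add_right _ _)
  rw [threshold_sub_two ha hae, threshold, Nat.mul_add]
  split_ifs with h
  · nlinarith [Nat.mul_le_mul_left d (by omega : a - 2 ≤ a)]
  · nlinarith [Nat.mul_le_mul_left d (not_lt.mp h)]

theorem threshold_le_threshold_sub_three (ha : 4 ≤ a) (hae : 2 ∣ a) {s : ℕ} (hs : s < a) :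
    threshold a d s ≤ threshold a d (a - 3) := by
  rw [threshold_sub_three ha hae, threshold]
  split_ifs with h
  · nlinarith [Nat.mul_le_mul_left a (by omega : a - 2 + s % 2 ≤ a - 1),
      Nat.mul_le_mul_left d (by omega : s + a ≤ 2 * a - 3)]
  · nlinarith [Nat.mul_le_mul_left a (by omega : a - 2 + s % 2 ≤ a - 1),
      Nat.mul_le_mul_left d (by omega : s ≤ 2 * a - 3)]

theorem sum_threshold (a d : ℕ) :
    ∑ s ∈ range a, threshold a d s =
      a * (a * (a - 2) + a / 2) + d * ∑ s ∈ range a, s + (a - 2) * (d * a) := by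
  simp only [threshold, sum_add_distrib, mul_add, ← mul_sum, sum_const, card_range, smul_eq_mul,
    sum_range_mod_two, sum_range_ite_lt (Nat.sub_le a 2)]
  rw [← mul_sum]

theorem isLeast_Sp3 (ha : 4 ≤ a) (hae : 2 ∣ a) (hd : 0 < d) (hgcd : Nat.gcd a d = 1) :
    IsLeast (Sp3 (a / 2 - 1) a d) (threshold a d (a - 2)) := by
  refine ⟨(mem_Sp3_iff ha hae hd hgcd (by omega) rfl).mpr le_rfl, fun n hn => ?_⟩
  obtain ⟨s, hs, hns⟩ := exists_lt_modEq (by omega) (threshold_mod_injOn hgcd) n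
  exact (threshold_sub_two_le (by omega) hae s).trans ((mem_Sp3_iff ha hae hd hgcd hs hns).mp hn)

theorem threshold_sub_three_sub_notMem_Sp3 (ha : 4 ≤ a) (hae : 2 ∣ a) (hd : 0 < d)
    (hgcd : Nat.gcd a d = 1) : threshold a d (a - 3) - a ∉ Sp3 (a / 2 - 1) a d := by
  have h := ncard_reps_threshold_sub_mul ha hae hd hgcd (s := a - 3) (c := 1) (by omega) le_rfl
  rw [mul_one] at h
  simp [Sp3, numRep3_eq_ncard_reps, h]

theorem le_threshold_sub_three_sub_of_notMem_Sp3 (ha : 4 ≤ a) (hae : 2 ∣ a) (hd : 0 < d)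
    (hgcd : Nat.gcd a d = 1) {n : ℕ} (hn : n ∉ Sp3 (a / 2 - 1) a d) :
    n ≤ threshold a d (a - 3) - a := by
  obtain ⟨s, hs, -, hle⟩ := exists_add_le_of_notMem (by omega) (threshold_mod_injOn hgcd)
    (fun s hs n hn => mem_Sp3_iff ha hae hd hgcd hs hn) hn
  have := threshold_le_threshold_sub_three (d := d) ha hae hs
  omega

theorem two_mul_ncard_notMem_Sp3 (ha : 4 ≤ a) (hae : 2 ∣ a) (hd : 0 < d)
    (hgcd : Nat.gcd a d = 1) :
    2 * {n | n ∉ Sp3 (a / 2 - 1) a d}.ncard =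
      threshold a d (a - 3) - a + threshold a d (a - 2) + 1 := by
  have hT := threshold_mod_injOn hgcd
  have hcount := mul_sum_div_add_sum_range (by omega) hT
  rw [← ncard_setOf_notMem (by omega) hT (fun s hs n hn => mem_Sp3_iff ha hae hd hgcd hs hn),
    sum_threshold] at hcount
  have hgauss := sum_range_id_mul_two a
  rw [threshold_sub_three ha hae, threshold_sub_two (by omega) hae]
  refine Nat.eq_of_mul_eq_mul_left (by omega : 0 < a) ?_
  have hle : a ≤ a * (a - 1) + d * (2 * a - 3) :=
    le_add_right (Nat.le_mul_of_pos_right a (by omega))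
  obtain ⟨m, rfl⟩ := hae
  rw [Nat.mul_div_cancel_left m two_pos] at hcount ⊢
  zify [(by omega : 2 ≤ 2 * m), (by omega : 1 ≤ 2 * m), (by omega : 3 ≤ 2 * (2 * m)), hle]
    at hcount hgauss ⊢
  linear_combination 2 * hcount + (d - 1) * hgauss

theorem two_mul_gap_count_formula (ha : 4 ≤ a) (hae : 2 ∣ a) (hdo : d % 2 = 1) :
    2 * ((2 * a + 2 * d - 1 - (a / 2 - 1)) * (a / 2 - 1) + ((a - 1) * (a + 2 * d - 1) + 1) / 4) =
      threshold a d (a - 3) - a + threshold a d (a - 2) + 1 := by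
  rw [threshold_sub_three ha hae, threshold_sub_two (by omega) hae]
  obtain ⟨k, rfl⟩ : ∃ k, a = 2 * k + 4 := ⟨a / 2 - 2, by omega⟩
  obtain ⟨t, rfl⟩ : ∃ t, d = 2 * t + 1 := ⟨d / 2, by omega⟩
  have hq : (2 * k + 4 - 1) * (2 * k + 4 + 2 * (2 * t + 1) - 1) + 1 =
      4 * (k * k + 2 * k * t + 4 * k + 3 * t + 4) := by
    rw [show 2 * k + 4 - 1 = 2 * k + 3 by omega,
      show 2 * k + 4 + 2 * (2 * t + 1) - 1 = 2 * k + 4 * t + 5 by omega]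
    ring
  rw [hq, Nat.mul_div_cancel_left _ (by norm_num), show (2 * k + 4) / 2 - 1 = k + 1 by omega,
    show 2 * (2 * k + 4) + 2 * (2 * t + 1) - 1 - (k + 1) = 3 * k + 4 * t + 8 by omega,
    show 2 * k + 4 - 1 = 2 * k + 3 by omega, show 2 * (2 * k + 4) - 3 = 4 * k + 5 by omega,
    show 2 * k + 4 - 2 = 2 * k + 2 by omega,
    show (2 * k + 4) * (2 * k + 3) + (2 * t + 1) * (4 * k + 5) - (2 * k + 4) =
      (2 * k + 4) * (2 * k + 2) + (2 * t + 1) * (4 * k + 5) by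
        rw [Nat.sub_eq_iff_eq_add (by nlinarith)]; ring]
  ring

end ArithTriple

open ArithTriple in
theorem stmt_19_general (a d : ℕ) (ha : 4 ≤ a) (hae : 2 ∣ a)
    (hgcd : Nat.gcd a d = 1) :
    IsLeast (Sp3 (a / 2 - 1) a d) (2 * (a / 2 - 1) * (a + d)) ∧
      ((a + 2 * d) * (a / 2 - 1) + ((a - 2) / 2) * a + (a - 1) * d ∉ Sp3 (a / 2 - 1) a d ∧
        ∀ n : ℕ, n ∉ Sp3 (a / 2 - 1) a d →
          n ≤ (a + 2 * d) * (a / 2 - 1) + ((a - 2) / 2) * a + (a - 1) * d) ∧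
      Set.ncard {n : ℕ | n ∉ Sp3 (a / 2 - 1) a d} =
        (2 * a + 2 * d - 1 - (a / 2 - 1)) * (a / 2 - 1) +
          ((a - 1) * (a + 2 * d - 1) + 1) / 4 ∧
      2 * Set.ncard {n : ℕ | n ∉ Sp3 (a / 2 - 1) a d} =
        ((a + 2 * d) * (a / 2 - 1) + ((a - 2) / 2) * a + (a - 1) * d) +
          2 * (a / 2 - 1) * (a + d) + 1 := by
  have hdo : d % 2 = 1 := Nat.two_dvd_ne_zero.mp fun h2 => by
    simpa [hgcd] using Nat.dvd_gcd hae h2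
  have hd : 0 < d := by omega
  have hℓ : 2 * (a / 2 - 1) * (a + d) = threshold a d (a - 2) := by
    rw [threshold_sub_two (by omega) hae, show 2 * (a / 2 - 1) = a - 2 by omega]
  have hg : (a + 2 * d) * (a / 2 - 1) + ((a - 2) / 2) * a + (a - 1) * d =
      threshold a d (a - 3) - a := by
    rw [threshold_sub_three ha hae]
    obtain ⟨m, rfl⟩ := hae
    rw [show 2 * m / 2 - 1 = m - 1 by omega, show (2 * m - 2) / 2 = m - 1 by omega]
    zify [(by omega : 1 ≤ m), (by omega : 1 ≤ 2 * m), (by omega : 3 ≤ 2 * (2 * m)),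
      (le_add_right (Nat.le_mul_of_pos_right _ (by omega)) :
        2 * m ≤ 2 * m * (2 * m - 1) + d * (2 * (2 * m) - 3))]
    ring
  have hN := two_mul_ncard_notMem_Sp3 ha hae hd hgcd
  rw [hℓ, hg]
  refine ⟨isLeast_Sp3 ha hae hd hgcd, ⟨threshold_sub_three_sub_notMem_Sp3 ha hae hd hgcd,
    fun n => le_threshold_sub_three_sub_of_notMem_Sp3 ha hae hd hgcd⟩, ?_, hN⟩
  have := two_mul_gap_count_formula ha hae hdo
  omega

theorem stmt_19 (a d : ℕ) (ha : 4 ≤ a) (hae : 2 ∣ a) (hd : 0 < d)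
    (hgcd : Nat.gcd a d = 1) :
    IsLeast (Sp3 (a / 2 - 1) a d) (2 * (a / 2 - 1) * (a + d)) ∧
      ((a + 2 * d) * (a / 2 - 1) + ((a - 2) / 2) * a + (a - 1) * d ∉ Sp3 (a / 2 - 1) a d ∧
        ∀ n : ℕ, n ∉ Sp3 (a / 2 - 1) a d →
          n ≤ (a + 2 * d) * (a / 2 - 1) + ((a - 2) / 2) * a + (a - 1) * d) ∧
      Set.ncard {n : ℕ | n ∉ Sp3 (a / 2 - 1) a d} =
        (2 * a + 2 * d - 1 - (a / 2 - 1)) * (a / 2 - 1) +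
          ((a - 1) * (a + 2 * d - 1) + 1) / 4 ∧
      2 * Set.ncard {n : ℕ | n ∉ Sp3 (a / 2 - 1) a d} =
        ((a + 2 * d) * (a / 2 - 1) + ((a - 2) / 2) * a + (a - 1) * d) +
          2 * (a / 2 - 1) * (a + d) + 1 :=
  stmt_19_general a d ha hae hgcd
end
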